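/- arXiv:1801.03655 — 4 statements merged into one kernel-verified Lean document; each statement's English description precedes it below -/
import Mathlib

section
/- For any discrete memoryless multiple access channel, all positive integers m, n, and all δ ≥ 0, one has (m+n)·σ_{m+n}(δ) ≥ m·σ_m(δ) + n·σ_n(δ). -/
open scoped BigOperators

noncomputable section

/-- Shannon entropy (base 2) of a (sub)probability mass function on a finite type. -/
def ent2 {α : Type} [Fintype α] (p : α → ℝ) : ℝ :=
  -∑ a, p a * Real.logb 2 (p a)

/-- Conditional mutual information `I(A;B|U)` (in bits) of the joint pmf `p` on `U × A × B`,
given in curried form, computed as `H(A|U) + H(B|U) - H(A,B|U)`. -/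
def condMI {U A B : Type} [Fintype U] [Fintype A] [Fintype B]
    (p : U → A → B → ℝ) : ℝ :=
  ent2 (fun ua : U × A => ∑ b, p ua.1 ua.2 b)
    + ent2 (fun ub : U × B => ∑ a, p ub.1 a ub.2)
    - ent2 (fun uab : U × A × B => p uab.1 uab.2.1 uab.2.2)
    - ent2 (fun u : U => ∑ a, ∑ b, p u a b)

/-- `p` is a joint pmf on `U × A × B` (curried form). -/
def IsPMF3 {U A B : Type} [Fintype U] [Fintype A] [Fintype B] (p : U → A → B → ℝ) : Prop :=
  (∀ u a b, 0 ≤ p u a b) ∧ ∑ u, ∑ a, ∑ b, p u a b = 1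

/-- A discrete memoryless multiple access channel with input alphabets `X1, X2` and
output alphabet `Y`. -/
structure MAC (X1 X2 Y : Type) [Fintype X1] [Fintype X2] [Fintype Y] where
  W : X1 → X2 → Y → ℝ
  nonneg : ∀ x1 x2 y, 0 ≤ W x1 x2 y
  sum_one : ∀ x1 x2, ∑ y, W x1 x2 y = 1

variable {X1 X2 Y : Type} [Fintype X1] [Fintype X2] [Fintype Y]

/-- The set of values `(1/n) I(X₁ⁿ,X₂ⁿ;Yⁿ|U)` over all finite auxiliary alphabets `U`
(wlog `U = Fin k`) and all joint pmfs `p(u,x₁ⁿ,x₂ⁿ)` with `I(X₁ⁿ;X₂ⁿ|U) ≤ nδ`,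
where `Yⁿ` is the output of the `n`-th extension of the MAC `M`. -/
def sigmaSet (M : MAC X1 X2 Y) (n : ℕ) (δ : ℝ) : Set ℝ :=
  {r | ∃ (k : ℕ) (p : Fin k → (Fin n → X1) → (Fin n → X2) → ℝ),
    IsPMF3 p ∧ condMI p ≤ (n : ℝ) * δ ∧
    r = (1 / (n : ℝ)) *
      condMI (fun (u : Fin k) (x : (Fin n → X1) × (Fin n → X2)) (y : Fin n → Y) =>
        p u x.1 x.2 * ∏ t, M.W (x.1 t) (x.2 t) (y t)) }

/-- `σ_n(δ)`. -/
def sigmaN (M : MAC X1 X2 Y) (n : ℕ) (δ : ℝ) : ℝ := sSup (sigmaSet M n δ)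

/-- `σ(δ) = lim_n σ_n(δ) = sup_n σ_n(δ)`. -/
def sigmaF (M : MAC X1 X2 Y) (δ : ℝ) : ℝ := ⨆ n : ℕ, sigmaN M (n + 1) δ

/-- `⌊2^{nR}⌋`, the size of a message (or link) index set. -/
def msgSize (n : ℕ) (R : ℝ) : ℕ := ⌊(2 : ℝ) ^ ((n : ℝ) * R)⌋₊

/-- A `(2^{nR₁}, 2^{nR₂}, n)`-code for the MAC `M` with a
`((c1,c2),(d1,d2))`-cooperation facilitator. -/
structure Code (M : MAC X1 X2 Y) (n : ℕ) (R1 R2 c1 c2 d1 d2 : ℝ) where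
  /-- encoder 1 to CF -/
  toCF1 : Fin (msgSize n R1) → Fin (msgSize n c1)
  /-- encoder 2 to CF -/
  toCF2 : Fin (msgSize n R2) → Fin (msgSize n c2)
  /-- CF to encoder 1 -/
  cf1 : Fin (msgSize n c1) → Fin (msgSize n c2) → Fin (msgSize n d1)
  /-- CF to encoder 2 -/
  cf2 : Fin (msgSize n c1) → Fin (msgSize n c2) → Fin (msgSize n d2)
  /-- encoder 1 -/
  f1 : Fin (msgSize n R1) → Fin (msgSize n d1) → Fin n → X1
  /-- encoder 2 -/
  f2 : Fin (msgSize n R2) → Fin (msgSize n d2) → Fin n → X2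
  /-- decoder -/
  dec : (Fin n → Y) → Fin (msgSize n R1) × Fin (msgSize n R2)

/-- The error probability `λ_n(w₁,w₂)` of the code `C` on the message pair `(w₁,w₂)`. -/
def errProb {M : MAC X1 X2 Y} {n : ℕ} {R1 R2 c1 c2 d1 d2 : ℝ}
    (C : Code M n R1 R2 c1 c2 d1 d2)
    (w1 : Fin (msgSize n R1)) (w2 : Fin (msgSize n R2)) : ℝ :=
  ∑ y : Fin n → Y,
    if C.dec y ≠ (w1, w2) then
      ∏ t, M.W (C.f1 w1 (C.cf1 (C.toCF1 w1) (C.toCF2 w2)) t)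
               (C.f2 w2 (C.cf2 (C.toCF1 w1) (C.toCF2 w2)) t) (y t)
    else 0

/-- Average error probability of a code. -/
def avgErr {M : MAC X1 X2 Y} {n : ℕ} {R1 R2 c1 c2 d1 d2 : ℝ}
    (C : Code M n R1 R2 c1 c2 d1 d2) : ℝ :=
  (1 / (2 : ℝ) ^ ((n : ℝ) * (R1 + R2))) * ∑ w1, ∑ w2, errProb C w1 w2

/-- Maximal error probability of a code. -/
def maxErr {M : MAC X1 X2 Y} {n : ℕ} {R1 R2 c1 c2 d1 d2 : ℝ}
    (C : Code M n R1 R2 c1 c2 d1 d2) : ℝ :=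
  sSup {e | ∃ w1 w2, e = errProb C w1 w2}

/-- `(R₁,R₂)` is achievable under the average-error criterion for the MAC `M` with a
`((c1,c2),(d1,d2))`-CF. -/
def AchievableAvg (M : MAC X1 X2 Y) (c1 c2 d1 d2 : ℝ) (R : ℝ × ℝ) : Prop :=
  0 ≤ R.1 ∧ 0 ≤ R.2 ∧
  ∃ C : (n : ℕ) → Code M (n + 1) R.1 R.2 c1 c2 d1 d2,
    Filter.Tendsto (fun n => avgErr (C n)) Filter.atTop (nhds 0)

/-- `(R₁,R₂)` is achievable under the maximal-error criterion. -/
def AchievableMax (M : MAC X1 X2 Y) (c1 c2 d1 d2 : ℝ) (R : ℝ × ℝ) : Prop :=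
  0 ≤ R.1 ∧ 0 ≤ R.2 ∧
  ∃ C : (n : ℕ) → Code M (n + 1) R.1 R.2 c1 c2 d1 d2,
    Filter.Tendsto (fun n => maxErr (C n)) Filter.atTop (nhds 0)

/-- Average-error sum-capacity `C_sum,avg(C_in, C_out)`. -/
def CsumAvg (M : MAC X1 X2 Y) (Cin Cout : ℝ × ℝ) : ℝ :=
  sSup {s | ∃ R ∈ closure {R : ℝ × ℝ | AchievableAvg M Cin.1 Cin.2 Cout.1 Cout.2 R},
    s = R.1 + R.2}

/-- Maximal-error sum-capacity `C_sum,max(C_in, C_out)`. -/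
def CsumMax (M : MAC X1 X2 Y) (Cin Cout : ℝ × ℝ) : ℝ :=
  sSup {s | ∃ R ∈ closure {R : ℝ × ℝ | AchievableMax M Cin.1 Cin.2 Cout.1 Cout.2 R},
    s = R.1 + R.2}

/-- `max_{p(x₁,x₂)} I(X₁,X₂;Y)`, used to specify when CF input links are large enough
that the CF has full knowledge of both messages. -/
def maxMI (M : MAC X1 X2 Y) : ℝ :=
  sSup {r | ∃ p : X1 × X2 → ℝ, (∀ x, 0 ≤ p x) ∧ (∑ x, p x = 1) ∧
    r = condMI (fun (_ : Unit) (x : X1 × X2) (y : Y) => p x * M.W x.1 x.2 y)}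

end
section AuxSuper

open Finset

variable {α β : Type} [Fintype α] [Fintype β]

lemma ent2_comp_equiv {α β : Type} [Fintype α] [Fintype β] (e : α ≃ β) (p : β → ℝ) :
    ent2 (fun a => p (e a)) = ent2 p := by
  unfold ent2
  rw [Equiv.sum_comp e (fun b => p b * Real.logb 2 (p b))]

lemma ent2_tensor (p : α → ℝ) (q : β → ℝ) :
    ent2 (fun x : α × β => p x.1 * q x.2)
      = (∑ b, q b) * ent2 p + (∑ a, p a) * ent2 q := by
  have key : ∀ (a : α) (b : β), p a * q b * Real.logb 2 (p a * q b)
      = q b * (p a * Real.logb 2 (p a)) + p a * (q b * Real.logb 2 (q b)) := by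
    intro a b
    rcases eq_or_ne (p a) 0 with h | h
    · simp [h]
    rcases eq_or_ne (q b) 0 with h' | h'
    · simp [h']
    rw [Real.logb_mul h h']; ring
  unfold ent2
  rw [Fintype.sum_prod_type]
  simp only [key, Finset.sum_add_distrib, ← Finset.mul_sum, ← Finset.sum_mul]
  ring

lemma tensor_sum_inner {A B C D : Type} [Fintype A] [Fintype B] [Fintype C] [Fintype D]
    (p : A → B → ℝ) (q : C → D → ℝ) :
    ∑ ac : A × C, ∑ bd : B × D, p ac.1 bd.1 * q ac.2 bd.2
      = (∑ a, ∑ b, p a b) * (∑ c, ∑ d, q c d) := by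
  have h1 : ∀ ac : A × C, (∑ bd : B × D, p ac.1 bd.1 * q ac.2 bd.2)
      = (∑ b, p ac.1 b) * (∑ d, q ac.2 d) := by
    intro ac
    rw [Fintype.sum_prod_type, Finset.sum_mul_sum]
  simp only [h1]
  rw [Fintype.sum_prod_type, Finset.sum_mul_sum]

lemma ent2_congr_equiv {α β : Type} [Fintype α] [Fintype β] (e : α ≃ β)
    (f : α → ℝ) (g : β → ℝ) (h : ∀ a, f a = g (e a)) : ent2 f = ent2 g := by
  unfold ent2
  congr 1
  exact Fintype.sum_equiv e _ _ (fun a => by rw [h])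

lemma condMI_comp_equiv {U A B U' A' B' : Type} [Fintype U] [Fintype A] [Fintype B]
    [Fintype U'] [Fintype A'] [Fintype B']
    (eU : U' ≃ U) (eA : A' ≃ A) (eB : B' ≃ B) (p : U → A → B → ℝ) :
    condMI (fun u a b => p (eU u) (eA a) (eB b)) = condMI p := by
  unfold condMI
  have t1 : ent2 (fun ua : U' × A' => ∑ b, p (eU ua.1) (eA ua.2) (eB b))
      = ent2 (fun ua : U × A => ∑ b, p ua.1 ua.2 b) := by
    refine ent2_congr_equiv (eU.prodCongr eA) _ _ fun ua => ?_
    exact Equiv.sum_comp eB (fun b => p (eU ua.1) (eA ua.2) b)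
  have t2 : ent2 (fun ub : U' × B' => ∑ a, p (eU ub.1) (eA a) (eB ub.2))
      = ent2 (fun ub : U × B => ∑ a, p ub.1 a ub.2) := by
    refine ent2_congr_equiv (eU.prodCongr eB) _ _ fun ub => ?_
    exact Equiv.sum_comp eA (fun a => p (eU ub.1) a (eB ub.2))
  have t3 : ent2 (fun uab : U' × A' × B' => p (eU uab.1) (eA uab.2.1) (eB uab.2.2))
      = ent2 (fun uab : U × A × B => p uab.1 uab.2.1 uab.2.2) :=
    ent2_congr_equiv (eU.prodCongr (eA.prodCongr eB)) _ _ fun uab => rfl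
  have t4 : ent2 (fun u : U' => ∑ a, ∑ b, p (eU u) (eA a) (eB b))
      = ent2 (fun u : U => ∑ a, ∑ b, p u a b) := by
    refine ent2_congr_equiv eU _ _ fun u => ?_
    refine Eq.trans ?_ (Equiv.sum_comp eA (fun a => ∑ b, p (eU u) a b))
    exact Finset.sum_congr rfl fun a _ => Equiv.sum_comp eB _
  rw [t1, t2, t3, t4]

set_option maxHeartbeats 1000000 in
lemma condMI_tensor {U A B V C D : Type} [Fintype U] [Fintype A] [Fintype B]
    [Fintype V] [Fintype C] [Fintype D]
    (p : U → A → B → ℝ) (q : V → C → D → ℝ)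
    (hp : ∑ u, ∑ a, ∑ b, p u a b = 1) (hq : ∑ v, ∑ c, ∑ d, q v c d = 1) :
    condMI (fun (uv : U × V) (ac : A × C) (bd : B × D) =>
        p uv.1 ac.1 bd.1 * q uv.2 ac.2 bd.2) = condMI p + condMI q := by
  have hp1 : (∑ ua : U × A, ∑ b, p ua.1 ua.2 b) = 1 := by
    rw [Fintype.sum_prod_type]; exact hp
  have hq1 : (∑ vc : V × C, ∑ d, q vc.1 vc.2 d) = 1 := by
    rw [Fintype.sum_prod_type]; exact hq
  have hp2 : (∑ ub : U × B, ∑ a, p ub.1 a ub.2) = 1 := by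
    rw [Fintype.sum_prod_type]
    calc ∑ u, ∑ b, ∑ a, p u a b = ∑ u, ∑ a, ∑ b, p u a b :=
          Finset.sum_congr rfl fun u _ => Finset.sum_comm
      _ = 1 := hp
  have hq2 : (∑ vd : V × D, ∑ c, q vd.1 c vd.2) = 1 := by
    rw [Fintype.sum_prod_type]
    calc ∑ v, ∑ d, ∑ c, q v c d = ∑ v, ∑ c, ∑ d, q v c d :=
          Finset.sum_congr rfl fun v _ => Finset.sum_comm
      _ = 1 := hq
  have hp3 : (∑ uab : U × A × B, p uab.1 uab.2.1 uab.2.2) = 1 := by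
    simp only [Fintype.sum_prod_type]; exact hp
  have hq3 : (∑ vcd : V × C × D, q vcd.1 vcd.2.1 vcd.2.2) = 1 := by
    simp only [Fintype.sum_prod_type]; exact hq
  unfold condMI
  have T1 : ent2 (fun x : (U × V) × (A × C) =>
        ∑ bd : B × D, p x.1.1 x.2.1 bd.1 * q x.1.2 x.2.2 bd.2)
      = ent2 (fun ua : U × A => ∑ b, p ua.1 ua.2 b)
        + ent2 (fun vc : V × C => ∑ d, q vc.1 vc.2 d) := by
    refine (ent2_congr_equiv (Equiv.prodProdProdComm U V A C) _
      (fun y : (U × A) × (V × C) =>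
        (∑ b, p y.1.1 y.1.2 b) * (∑ d, q y.2.1 y.2.2 d)) fun x => ?_).trans ?_
    · simp only [Equiv.prodProdProdComm_apply]
      exact (Fintype.sum_prod_type _).trans
        (Finset.sum_mul_sum Finset.univ Finset.univ
          (fun b => p x.1.1 x.2.1 b) (fun d => q x.1.2 x.2.2 d)).symm
    · rw [ent2_tensor (fun ua : U × A => ∑ b, p ua.1 ua.2 b)
        (fun vc : V × C => ∑ d, q vc.1 vc.2 d), hp1, hq1]
      ring
  have T2 : ent2 (fun x : (U × V) × (B × D) =>
        ∑ ac : A × C, p x.1.1 ac.1 x.2.1 * q x.1.2 ac.2 x.2.2)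
      = ent2 (fun ub : U × B => ∑ a, p ub.1 a ub.2)
        + ent2 (fun vd : V × D => ∑ c, q vd.1 c vd.2) := by
    refine (ent2_congr_equiv (Equiv.prodProdProdComm U V B D) _
      (fun y : (U × B) × (V × D) =>
        (∑ a, p y.1.1 a y.1.2) * (∑ c, q y.2.1 c y.2.2)) fun x => ?_).trans ?_
    · simp only [Equiv.prodProdProdComm_apply]
      exact (Fintype.sum_prod_type _).trans
        (Finset.sum_mul_sum Finset.univ Finset.univ
          (fun a => p x.1.1 a x.2.1) (fun c => q x.1.2 c x.2.2)).symm
    · rw [ent2_tensor (fun ub : U × B => ∑ a, p ub.1 a ub.2)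
        (fun vd : V × D => ∑ c, q vd.1 c vd.2), hp2, hq2]
      ring
  have T3 : ent2 (fun x : (U × V) × (A × C) × (B × D) =>
        p x.1.1 x.2.1.1 x.2.2.1 * q x.1.2 x.2.1.2 x.2.2.2)
      = ent2 (fun uab : U × A × B => p uab.1 uab.2.1 uab.2.2)
        + ent2 (fun vcd : V × C × D => q vcd.1 vcd.2.1 vcd.2.2) := by
    refine (ent2_congr_equiv
      (((Equiv.refl (U × V)).prodCongr (Equiv.prodProdProdComm A C B D)).trans
        (Equiv.prodProdProdComm U V (A × B) (C × D))) _
      (fun y : (U × A × B) × (V × C × D) =>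
        p y.1.1 y.1.2.1 y.1.2.2 * q y.2.1 y.2.2.1 y.2.2.2) fun x => rfl).trans ?_
    rw [ent2_tensor (fun uab : U × A × B => p uab.1 uab.2.1 uab.2.2)
      (fun vcd : V × C × D => q vcd.1 vcd.2.1 vcd.2.2), hp3, hq3]
    ring
  have T4 : ent2 (fun uv : U × V =>
        ∑ ac : A × C, ∑ bd : B × D, p uv.1 ac.1 bd.1 * q uv.2 ac.2 bd.2)
      = ent2 (fun u : U => ∑ a, ∑ b, p u a b)
        + ent2 (fun v : V => ∑ c, ∑ d, q v c d) := by
    refine (ent2_congr_equiv (Equiv.refl (U × V)) _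
      (fun y : U × V => (∑ a, ∑ b, p y.1 a b) * (∑ c, ∑ d, q y.2 c d))
      fun uv => tensor_sum_inner (fun a b => p uv.1 a b) (fun c d => q uv.2 c d)).trans ?_
    rw [ent2_tensor (fun u : U => ∑ a, ∑ b, p u a b) (fun v : V => ∑ c, ∑ d, q v c d),
      hp, hq]
    ring
  rw [T1, T2, T3, T4]
  ring

lemma ent2_marg_le {α β : Type} [Fintype α] [Fintype β] (f : α × β → ℝ)
    (h0 : ∀ x, 0 ≤ f x) :
    ent2 (fun a => ∑ b, f (a, b)) ≤ ent2 f := by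
  unfold ent2
  rw [neg_le_neg_iff, Fintype.sum_prod_type]
  apply Finset.sum_le_sum
  intro a _
  have hrw : (∑ b, f (a, b)) * Real.logb 2 (∑ b, f (a, b))
      = ∑ b, f (a, b) * Real.logb 2 (∑ b', f (a, b')) := by
    rw [Finset.sum_mul]
  rw [hrw]
  apply Finset.sum_le_sum
  intro b _
  rcases eq_or_lt_of_le (h0 (a, b)) with h | h
  · rw [← h]; simp
  · have hm : f (a, b) ≤ ∑ b', f (a, b') :=
      Finset.single_le_sum (fun i _ => h0 (a, i)) (Finset.mem_univ b)
    exact mul_le_mul_of_nonneg_left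
      ((Real.logb_le_logb one_lt_two h (lt_of_lt_of_le h hm)).2 hm) h.le

lemma ent2_le_marg_add {α β : Type} [Fintype α] [Fintype β] (f : α × β → ℝ)
    (h0 : ∀ x, 0 ≤ f x) (h1 : ∑ x, f x = 1) :
    ent2 f ≤ ent2 (fun a => ∑ b, f (a, b)) + Real.logb 2 (Fintype.card β) := by
  have hβ : Nonempty β := by
    by_contra hb
    haveI : IsEmpty β := not_nonempty_iff.mp hb
    haveI : IsEmpty (α × β) := Prod.isEmpty_right
    rw [Finset.univ_eq_empty, Finset.sum_empty] at h1
    exact one_ne_zero h1.symm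
  have hc : (0 : ℝ) < (Fintype.card β : ℝ) := by
    have := Fintype.card_pos_iff.mpr hβ
    exact_mod_cast this
  set c : ℝ := (Fintype.card β : ℝ) with hc_def
  have hlog2 : (0 : ℝ) < Real.log 2 := Real.log_pos one_lt_two
  -- rewrite marginal entropy as a sum over the product
  have hmargsum : ∀ g : α → ℝ, (∑ a, (∑ b, f (a, b)) * g a)
      = ∑ x : α × β, f x * g x.1 := by
    intro g
    rw [Fintype.sum_prod_type]
    exact Finset.sum_congr rfl fun a _ => by rw [Finset.sum_mul]
  have key : ∑ x : α × β, f x * (Real.logb 2 (∑ b, f (x.1, b)) - Real.logb 2 (f x))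
      ≤ Real.logb 2 c := by
    have hsum_marg : (∑ x : α × β, (∑ b, f (x.1, b))) = c := by
      rw [Fintype.sum_prod_type]
      have : ∀ a : α, (∑ _b : β, (∑ b, f (a, b))) = c * (∑ b, f (a, b)) := by
        intro a
        rw [Finset.sum_const, nsmul_eq_mul, Finset.card_univ]
      rw [Finset.sum_congr rfl fun a _ => this a, ← Finset.mul_sum]
      have : (∑ a, ∑ b, f (a, b)) = 1 := by rw [← Fintype.sum_prod_type]; exact h1
      rw [this, mul_one]
    calc ∑ x : α × β, f x * (Real.logb 2 (∑ b, f (x.1, b)) - Real.logb 2 (f x))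
        ≤ ∑ x : α × β, (f x * Real.logb 2 c
            + ((∑ b, f (x.1, b)) / c - f x) / Real.log 2) := by
          apply Finset.sum_le_sum
          intro x _
          set mg : ℝ := ∑ b, f (x.1, b) with hmg
          have hmg0 : 0 ≤ mg := Finset.sum_nonneg fun i _ => h0 _
          rcases eq_or_lt_of_le (h0 x) with h | h
          · rw [← h]
            simp only [mul_zero, zero_mul, sub_zero, zero_add]
            positivity
          · have hfm : f x ≤ mg := by
              rw [hmg]
              have : f x = f (x.1, x.2) := by rw [Prod.mk.eta]
              rw [this]
              exact Finset.single_le_sum (fun i _ => h0 (x.1, i)) (Finset.mem_univ x.2)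
            have hmgpos : 0 < mg := lt_of_lt_of_le h hfm
            have hsplit : Real.logb 2 mg - Real.logb 2 (f x)
                = Real.logb 2 (mg / (c * f x)) + Real.logb 2 c := by
              rw [Real.logb_div (by positivity) (by positivity),
                Real.logb_mul (by positivity) (by positivity)]
              ring
            rw [hsplit]
            have hle : Real.logb 2 (mg / (c * f x)) ≤ (mg / (c * f x) - 1) / Real.log 2 := by
              rw [Real.logb, div_le_div_iff_of_pos_right hlog2]
              exact Real.log_le_sub_one_of_pos (by positivity)
            have := mul_le_mul_of_nonneg_left hle h.le
            have hfe : f x * ((mg / (c * f x) - 1) / Real.log 2)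
                = (mg / c - f x) / Real.log 2 := by
              field_simp
            nlinarith [this, hfe]
      _ = Real.logb 2 c := by
          rw [Finset.sum_add_distrib, ← Finset.sum_mul, h1, one_mul]
          have : (∑ x : α × β, ((∑ b, f (x.1, b)) / c - f x) / Real.log 2)
              = ((∑ x : α × β, (∑ b, f (x.1, b))) / c - ∑ x : α × β, f x) / Real.log 2 := by
            rw [← Finset.sum_div, Finset.sum_sub_distrib, Finset.sum_div]
          rw [this, hsum_marg, h1, div_self (ne_of_gt hc), sub_self, zero_div, add_zero]
  -- put everything together
  have expand : ent2 f - ent2 (fun a => ∑ b, f (a, b))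
      = ∑ x : α × β, f x * (Real.logb 2 (∑ b, f (x.1, b)) - Real.logb 2 (f x)) := by
    unfold ent2
    simp only [mul_sub]
    rw [Finset.sum_sub_distrib, ← hmargsum (fun a => Real.logb 2 (∑ b, f (a, b)))]
    ring
  linarith [key, expand]

lemma condMI_le_logb {U A B : Type} [Fintype U] [Fintype A] [Fintype B] (p : U → A → B → ℝ)
    (h0 : ∀ u a b, 0 ≤ p u a b) (h1 : ∑ u, ∑ a, ∑ b, p u a b = 1) :
    condMI p ≤ Real.logb 2 (Fintype.card B) := by
  have h13 : ent2 (fun ua : U × A => ∑ b, p ua.1 ua.2 b)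
      ≤ ent2 (fun uab : U × A × B => p uab.1 uab.2.1 uab.2.2) := by
    have step : ent2 (fun ua : U × A => ∑ b, p ua.1 ua.2 b)
        ≤ ent2 (fun x : (U × A) × B => p x.1.1 x.1.2 x.2) :=
      ent2_marg_le (fun x : (U × A) × B => p x.1.1 x.1.2 x.2) (fun x => h0 _ _ _)
    have eq1 : ent2 (fun x : (U × A) × B => p x.1.1 x.1.2 x.2)
        = ent2 (fun uab : U × A × B => p uab.1 uab.2.1 uab.2.2) :=
      ent2_congr_equiv (Equiv.prodAssoc U A B) _ _ fun x => rfl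
    linarith
  have h24 : ent2 (fun ub : U × B => ∑ a, p ub.1 a ub.2)
      ≤ ent2 (fun u : U => ∑ a, ∑ b, p u a b) + Real.logb 2 (Fintype.card B) := by
    have hsum : ∑ x : U × B, (∑ a, p x.1 a x.2) = 1 := by
      rw [Fintype.sum_prod_type]
      calc ∑ u, ∑ b, ∑ a, p u a b = ∑ u, ∑ a, ∑ b, p u a b :=
            Finset.sum_congr rfl fun u _ => Finset.sum_comm
        _ = 1 := h1
    have step : ent2 (fun ub : U × B => ∑ a, p ub.1 a ub.2)
        ≤ ent2 (fun u : U => ∑ b, ∑ a, p u a b) + Real.logb 2 (Fintype.card B) :=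
      ent2_le_marg_add (fun ub : U × B => ∑ a, p ub.1 a ub.2)
        (fun x => Finset.sum_nonneg fun a _ => h0 _ _ _) hsum
    have eq1 : ent2 (fun u : U => ∑ b, ∑ a, p u a b)
        = ent2 (fun u : U => ∑ a, ∑ b, p u a b) :=
      ent2_congr_equiv (Equiv.refl U) _ _ fun u => Finset.sum_comm
    linarith
  unfold condMI
  linarith

lemma ent2_of_mem01 {α : Type} [Fintype α] (p : α → ℝ) (h : ∀ a, p a = 0 ∨ p a = 1) :
    ent2 p = 0 := by
  unfold ent2
  rw [Finset.sum_eq_zero, neg_zero]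
  intro a _
  rcases h a with h' | h' <;> simp [h']

def splitE (α : Type) (m n : ℕ) : (Fin (m + n) → α) ≃ (Fin m → α) × (Fin n → α) :=
  (Equiv.arrowCongr finSumFinEquiv.symm (Equiv.refl α)).trans
    (Equiv.sumArrowEquivProdArrow _ _ _)

lemma splitE_fst {α : Type} {m n : ℕ} (x : Fin (m + n) → α) (i : Fin m) :
    (splitE α m n x).1 i = x (Fin.castAdd n i) := by
  simp [splitE, Equiv.sumArrowEquivProdArrow, Equiv.arrowCongr]

lemma splitE_snd {α : Type} {m n : ℕ} (x : Fin (m + n) → α) (j : Fin n) :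
    (splitE α m n x).2 j = x (Fin.natAdd m j) := by
  simp [splitE, Equiv.sumArrowEquivProdArrow, Equiv.arrowCongr]

lemma sum_prod_W {Y' : Type} [Fintype Y'] {n : ℕ} (g : Fin n → Y' → ℝ)
    (hg : ∀ t, ∑ y, g t y = 1) : ∑ y : Fin n → Y', ∏ t, g t (y t) = 1 := by
  classical
  rw [← Fintype.piFinset_univ, ← Finset.prod_univ_sum]
  simp [hg]

lemma chanExt_nonneg {X1 X2 Y : Type} [Fintype X1] [Fintype X2] [Fintype Y]
    (M : MAC X1 X2 Y) {k N : ℕ} (p : Fin k → (Fin N → X1) → (Fin N → X2) → ℝ)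
    (h0 : ∀ u a b, 0 ≤ p u a b) :
    ∀ (u : Fin k) (x : (Fin N → X1) × (Fin N → X2)) (y : Fin N → Y),
      0 ≤ p u x.1 x.2 * ∏ t, M.W (x.1 t) (x.2 t) (y t) :=
  fun _ x _ => mul_nonneg (h0 _ _ _) (Finset.prod_nonneg fun t _ => M.nonneg _ _ _)

lemma chanExt_sum {X1 X2 Y : Type} [Fintype X1] [Fintype X2] [Fintype Y]
    (M : MAC X1 X2 Y) {k N : ℕ} (p : Fin k → (Fin N → X1) → (Fin N → X2) → ℝ)
    (h1 : ∑ u, ∑ a, ∑ b, p u a b = 1) :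
    ∑ u, ∑ x : (Fin N → X1) × (Fin N → X2), ∑ y : Fin N → Y,
      p u x.1 x.2 * ∏ t, M.W (x.1 t) (x.2 t) (y t) = 1 := by
  have hy : ∀ (a : Fin N → X1) (b : Fin N → X2),
      (∑ y : Fin N → Y, ∏ t, M.W (a t) (b t) (y t)) = 1 :=
    fun a b => sum_prod_W (fun t c => M.W (a t) (b t) c) (fun t => M.sum_one _ _)
  have hin : ∀ (u : Fin k) (x : (Fin N → X1) × (Fin N → X2)),
      (∑ y : Fin N → Y, p u x.1 x.2 * ∏ t, M.W (x.1 t) (x.2 t) (y t)) = p u x.1 x.2 := by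
    intro u x
    rw [← Finset.mul_sum, hy, mul_one]
  simp only [hin]
  calc ∑ u, ∑ x : (Fin N → X1) × (Fin N → X2), p u x.1 x.2
      = ∑ u, ∑ a, ∑ b, p u a b :=
        Finset.sum_congr rfl fun u _ => Fintype.sum_prod_type _
    _ = 1 := h1

lemma sigmaSet_bddAbove {X1 X2 Y : Type} [Fintype X1] [Fintype X2] [Fintype Y]
    (M : MAC X1 X2 Y) (N : ℕ) (δ : ℝ) :
    BddAbove (sigmaSet M N δ) := by
  refine ⟨(1 / (N : ℝ)) * Real.logb 2 (Fintype.card (Fin N → Y)), ?_⟩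
  rintro r ⟨k, p, hpmf, hcons, rfl⟩
  have hb := condMI_le_logb
    (fun (u : Fin k) (x : (Fin N → X1) × (Fin N → X2)) (y : Fin N → Y) =>
      p u x.1 x.2 * ∏ t, M.W (x.1 t) (x.2 t) (y t))
    (chanExt_nonneg M p hpmf.1) (chanExt_sum M p hpmf.2)
  have h1N : (0:ℝ) ≤ 1 / (N:ℝ) := by positivity
  exact mul_le_mul_of_nonneg_left hb h1N

lemma sigmaSet_nonempty {X1 X2 Y : Type} [Fintype X1] [Fintype X2] [Fintype Y]
    (M : MAC X1 X2 Y) (N : ℕ) (δ : ℝ) (hδ : 0 ≤ δ)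
    (hX1 : Nonempty X1) (hX2 : Nonempty X2) : (sigmaSet M N δ).Nonempty := by
  classical
  obtain ⟨a0⟩ := hX1
  obtain ⟨b0⟩ := hX2
  set c1 : Fin N → X1 := fun _ => a0 with hc1
  set c2 : Fin N → X2 := fun _ => b0 with hc2
  set p : Fin 1 → (Fin N → X1) → (Fin N → X2) → ℝ :=
    fun _ a b => (if a = c1 then (1:ℝ) else 0) * (if b = c2 then (1:ℝ) else 0) with hp
  have hsum2 : (∑ b : Fin N → X2, if b = c2 then (1:ℝ) else 0) = 1 := by
    rw [Finset.sum_ite_eq' Finset.univ c2 (fun _ => (1:ℝ))]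
    simp
  have hsum1 : (∑ a : Fin N → X1, if a = c1 then (1:ℝ) else 0) = 1 := by
    rw [Finset.sum_ite_eq' Finset.univ c1 (fun _ => (1:ℝ))]
    simp
  have hpmf : IsPMF3 p := by
    constructor
    · intro u a b
      simp only [hp]
      split_ifs <;> norm_num
    · simp only [hp]
      rw [Finset.sum_const]
      simp only [← Finset.mul_sum, hsum2, mul_one, hsum1]
      simp
  have hcond : condMI p = 0 := by
    have e1 : ent2 (fun ua : Fin 1 × (Fin N → X1) => ∑ b, p ua.1 ua.2 b) = 0 := by
      refine ent2_of_mem01 _ fun z => ?_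
      simp only [hp, ← Finset.mul_sum, hsum2, mul_one]
      by_cases h : z.2 = c1 <;> simp [h]
    have e2 : ent2 (fun ub : Fin 1 × (Fin N → X2) => ∑ a, p ub.1 a ub.2) = 0 := by
      refine ent2_of_mem01 _ fun z => ?_
      simp only [hp, ← Finset.sum_mul, hsum1, one_mul]
      by_cases h : z.2 = c2 <;> simp [h]
    have e3 : ent2 (fun uab : Fin 1 × (Fin N → X1) × (Fin N → X2) =>
        p uab.1 uab.2.1 uab.2.2) = 0 := by
      refine ent2_of_mem01 _ fun z => ?_
      simp only [hp]
      by_cases h : z.2.1 = c1 <;> by_cases h' : z.2.2 = c2 <;> simp [h, h']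
    have e4 : ent2 (fun u : Fin 1 => ∑ a, ∑ b, p u a b) = 0 := by
      refine ent2_of_mem01 _ fun z => ?_
      simp only [hp, ← Finset.mul_sum, hsum2, mul_one, hsum1]
      simp
    unfold condMI
    rw [e1, e2, e3, e4]
    ring
  refine ⟨_, 1, p, hpmf, ?_, rfl⟩
  rw [hcond]
  positivity

set_option maxHeartbeats 1000000 in
lemma sigmaSet_combine {X1 X2 Y : Type} [Fintype X1] [Fintype X2] [Fintype Y]
    (M : MAC X1 X2 Y) (m n : ℕ) (hm : 1 ≤ m) (hn : 1 ≤ n) (δ : ℝ)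
    {a b : ℝ} (ha : a ∈ sigmaSet M m δ) (hb : b ∈ sigmaSet M n δ) :
    ∃ c ∈ sigmaSet M (m + n) δ, (m : ℝ) * a + (n : ℝ) * b = ((m + n : ℕ) : ℝ) * c := by
  classical
  obtain ⟨k, p, hp, hpcons, rfl⟩ := ha
  obtain ⟨l, q, hq, hqcons, rfl⟩ := hb
  set P2 : (Fin k × Fin l) → ((Fin m → X1) × (Fin n → X1)) →
      ((Fin m → X2) × (Fin n → X2)) → ℝ :=
    fun uv ac bd => p uv.1 ac.1 bd.1 * q uv.2 ac.2 bd.2 with hP2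
  set r : Fin (k * l) → (Fin (m + n) → X1) → (Fin (m + n) → X2) → ℝ :=
    fun w x z => P2 (finProdFinEquiv.symm w) (splitE X1 m n x) (splitE X2 m n z) with hr
  -- the combined distribution is a pmf
  have hr_nonneg : ∀ w x z, 0 ≤ r w x z := by
    intro w x z
    exact mul_nonneg (hp.1 _ _ _) (hq.1 _ _ _)
  have hr_sum : ∑ w, ∑ x, ∑ z, r w x z = 1 := by
    have e1 : (∑ w, ∑ x, ∑ z, r w x z) = ∑ uv : Fin k × Fin l,
        ∑ ac : (Fin m → X1) × (Fin n → X1), ∑ bd : (Fin m → X2) × (Fin n → X2),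
          P2 uv ac bd := by
      refine Fintype.sum_equiv finProdFinEquiv.symm _ _ fun w => ?_
      refine Fintype.sum_equiv (splitE X1 m n) _ _ fun x => ?_
      exact Fintype.sum_equiv (splitE X2 m n) _ _ fun z => rfl
    rw [e1]
    have e2 : ∀ uv : Fin k × Fin l,
        (∑ ac : (Fin m → X1) × (Fin n → X1), ∑ bd : (Fin m → X2) × (Fin n → X2),
          P2 uv ac bd)
        = (∑ a', ∑ b', p uv.1 a' b') * (∑ c', ∑ d', q uv.2 c' d') := by
      intro uv
      exact tensor_sum_inner (fun a' b' => p uv.1 a' b') (fun c' d' => q uv.2 c' d')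
    rw [Finset.sum_congr rfl fun uv _ => e2 uv, Fintype.sum_prod_type,
      ← Finset.sum_mul_sum Finset.univ Finset.univ
        (fun u => ∑ a', ∑ b', p u a' b') (fun v => ∑ c', ∑ d', q v c' d'),
      hp.2, hq.2, mul_one]
  -- the independence constraint
  have hr_cons : condMI r = condMI p + condMI q := by
    have h1 : condMI r = condMI P2 :=
      condMI_comp_equiv finProdFinEquiv.symm (splitE X1 m n) (splitE X2 m n) P2
    rw [h1, hP2]
    exact condMI_tensor p q hp.2 hq.2
  -- the channel-extended mutual information
  set Fp : Fin k → ((Fin m → X1) × (Fin m → X2)) → (Fin m → Y) → ℝ :=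
    fun u x y => p u x.1 x.2 * ∏ t, M.W (x.1 t) (x.2 t) (y t) with hFp
  set Fq : Fin l → ((Fin n → X1) × (Fin n → X2)) → (Fin n → Y) → ℝ :=
    fun u x y => q u x.1 x.2 * ∏ t, M.W (x.1 t) (x.2 t) (y t) with hFq
  set Q2 : (Fin k × Fin l) → (((Fin m → X1) × (Fin m → X2)) ×
        ((Fin n → X1) × (Fin n → X2))) → ((Fin m → Y) × (Fin n → Y)) → ℝ :=
    fun uv ac bd => Fp uv.1 ac.1 bd.1 * Fq uv.2 ac.2 bd.2 with hQ2
  set eX : ((Fin (m + n) → X1) × (Fin (m + n) → X2)) ≃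
      (((Fin m → X1) × (Fin m → X2)) × ((Fin n → X1) × (Fin n → X2))) :=
    ((splitE X1 m n).prodCongr (splitE X2 m n)).trans
      (Equiv.prodProdProdComm (Fin m → X1) (Fin n → X1) (Fin m → X2) (Fin n → X2)) with heX
  have hFeq : (fun (w : Fin (k * l)) (x : (Fin (m + n) → X1) × (Fin (m + n) → X2))
        (y : Fin (m + n) → Y) => r w x.1 x.2 * ∏ t, M.W (x.1 t) (x.2 t) (y t))
      = fun w x y => Q2 (finProdFinEquiv.symm w) (eX x) (splitE Y m n y) := by
    funext w x y
    simp only [hr, hP2, hQ2, hFp, hFq, heX, Equiv.trans_apply, Equiv.prodCongr_apply,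
      Prod.map_fst, Prod.map_snd, Equiv.prodProdProdComm_apply]
    rw [Fin.prod_univ_add (f := fun t => M.W (x.1 t) (x.2 t) (y t))]
    have h1 : (∏ i : Fin m, M.W ((splitE X1 m n x.1).1 i) ((splitE X2 m n x.2).1 i)
          ((splitE Y m n y).1 i))
        = ∏ i : Fin m, M.W (x.1 (Fin.castAdd n i)) (x.2 (Fin.castAdd n i))
          (y (Fin.castAdd n i)) := by
      refine Finset.prod_congr rfl fun i _ => ?_
      rw [splitE_fst, splitE_fst, splitE_fst]
    have h2 : (∏ j : Fin n, M.W ((splitE X1 m n x.1).2 j) ((splitE X2 m n x.2).2 j)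
          ((splitE Y m n y).2 j))
        = ∏ j : Fin n, M.W (x.1 (Fin.natAdd m j)) (x.2 (Fin.natAdd m j))
          (y (Fin.natAdd m j)) := by
      refine Finset.prod_congr rfl fun j _ => ?_
      rw [splitE_snd, splitE_snd, splitE_snd]
    rw [← h1, ← h2]
    ring
  have hFval : condMI (fun (w : Fin (k * l))
        (x : (Fin (m + n) → X1) × (Fin (m + n) → X2)) (y : Fin (m + n) → Y) =>
        r w x.1 x.2 * ∏ t, M.W (x.1 t) (x.2 t) (y t))
      = condMI Fp + condMI Fq := by
    rw [hFeq]
    have h1 : condMI (fun w x y => Q2 (finProdFinEquiv.symm w) (eX x) (splitE Y m n y))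
        = condMI Q2 :=
      condMI_comp_equiv finProdFinEquiv.symm eX (splitE Y m n) Q2
    rw [h1, hQ2]
    exact condMI_tensor Fp Fq (chanExt_sum M p hp.2) (chanExt_sum M q hq.2)
  -- conclude
  have hmR : (0:ℝ) < m := by exact_mod_cast hm
  have hnR : (0:ℝ) < n := by exact_mod_cast hn
  refine ⟨(1 / ((m + n : ℕ) : ℝ)) * condMI (fun (w : Fin (k * l))
      (x : (Fin (m + n) → X1) × (Fin (m + n) → X2)) (y : Fin (m + n) → Y) =>
      r w x.1 x.2 * ∏ t, M.W (x.1 t) (x.2 t) (y t)), ⟨k * l, r, ⟨hr_nonneg, hr_sum⟩, ?_, rfl⟩, ?_⟩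
  · rw [hr_cons]
    push_cast
    calc condMI p + condMI q ≤ (m : ℝ) * δ + (n : ℝ) * δ := add_le_add hpcons hqcons
      _ = ((m : ℝ) + n) * δ := by ring
  · rw [hFval]
    have hmn : ((m + n : ℕ) : ℝ) = (m : ℝ) + n := by push_cast; ring
    rw [hmn]
    field_simp

end AuxSuper
/-- Superadditivity: for all positive integers `m, n` and all `δ ≥ 0`,
`(m+n)·σ_{m+n}(δ) ≥ m·σ_m(δ) + n·σ_n(δ)`. -/
theorem sigmaN_superadditive
    {X1 X2 Y : Type} [Fintype X1] [Fintype X2] [Fintype Y]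
    (M : MAC X1 X2 Y) (m n : ℕ) (hm : 1 ≤ m) (hn : 1 ≤ n) (δ : ℝ) (hδ : 0 ≤ δ) :
    (m : ℝ) * sigmaN M m δ + (n : ℝ) * sigmaN M n δ ≤
      ((m + n : ℕ) : ℝ) * sigmaN M (m + n) δ := by
  classical
  have hemptycase : ∀ (Z : Type) [Fintype Z], IsEmpty Z →
      (∀ (k N : ℕ), 1 ≤ N → ∀ p : Fin k → (Fin N → X1) → (Fin N → X2) → ℝ,
        IsPMF3 p → (Nonempty (Fin N → X1) ∧ Nonempty (Fin N → X2))) := by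
    intro Z _ _ k N hN p hp
    constructor
    · by_contra h
      haveI : IsEmpty (Fin N → X1) := not_nonempty_iff.mp h
      have := hp.2
      simp [Finset.univ_eq_empty] at this
    · by_contra h
      haveI : IsEmpty (Fin N → X2) := not_nonempty_iff.mp h
      have := hp.2
      simp [Finset.univ_eq_empty] at this
  have hempty1 : IsEmpty X1 ∨ IsEmpty X2 → ∀ N : ℕ, 1 ≤ N → sigmaSet M N δ = ∅ := by
    intro hE N hN
    ext r
    simp only [sigmaSet, Set.mem_setOf_eq, Set.mem_empty_iff_false, iff_false]
    rintro ⟨k, p, hpmf, -, -⟩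
    have hFN : Nonempty (Fin N) := Fin.pos_iff_nonempty.mp (by omega)
    rcases hE with hE | hE
    · haveI : IsEmpty (Fin N → X1) :=
        ⟨fun f => IsEmpty.false (f (Classical.arbitrary (Fin N)))⟩
      have := hpmf.2
      simp [Finset.univ_eq_empty] at this
    · haveI : IsEmpty (Fin N → X2) :=
        ⟨fun f => IsEmpty.false (f (Classical.arbitrary (Fin N)))⟩
      have := hpmf.2
      simp [Finset.univ_eq_empty] at this
  rcases isEmpty_or_nonempty X1 with hE | hX1
  · simp only [sigmaN]
    rw [hempty1 (Or.inl hE) m hm, hempty1 (Or.inl hE) n hn,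
      hempty1 (Or.inl hE) (m + n) (by omega), Real.sSup_empty]
    simp
  rcases isEmpty_or_nonempty X2 with hE | hX2
  · simp only [sigmaN]
    rw [hempty1 (Or.inr hE) m hm, hempty1 (Or.inr hE) n hn,
      hempty1 (Or.inr hE) (m + n) (by omega), Real.sSup_empty]
    simp
  rcases isEmpty_or_nonempty Y with hE | hY
  · exfalso
    have := M.sum_one (Classical.arbitrary X1) (Classical.arbitrary X2)
    rw [Finset.univ_eq_empty, Finset.sum_empty] at this
    exact one_ne_zero this.symm
  -- main case
  have hbdd := sigmaSet_bddAbove M (m + n) δ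
  have hneS : ∀ N : ℕ, (sigmaSet M N δ).Nonempty :=
    fun N => sigmaSet_nonempty M N δ hδ hX1 hX2
  have key : ∀ a ∈ sigmaSet M m δ, ∀ b ∈ sigmaSet M n δ,
      (m : ℝ) * a + (n : ℝ) * b ≤ ((m + n : ℕ) : ℝ) * sigmaN M (m + n) δ := by
    intro a ha b hb
    obtain ⟨c, hc, hco⟩ := sigmaSet_combine M m n hm hn δ ha hb
    rw [hco]
    have hcle : c ≤ sigmaN M (m + n) δ := le_csSup hbdd hc
    have hpos : (0 : ℝ) < ((m + n : ℕ) : ℝ) := by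
      have : 1 ≤ m + n := by omega
      exact_mod_cast Nat.lt_of_lt_of_le Nat.zero_lt_one this
    nlinarith
  set K := ((m + n : ℕ) : ℝ) * sigmaN M (m + n) δ with hK
  have hmR : (0 : ℝ) < m := by exact_mod_cast hm
  have hnR : (0 : ℝ) < n := by exact_mod_cast hn
  have h2 : sigmaN M n δ ≤ (K - (m : ℝ) * sigmaN M m δ) / (n : ℝ) := by
    simp only [sigmaN]
    apply csSup_le (hneS n)
    intro b hb
    rw [le_div_iff₀ hnR]
    have h3 : sSup (sigmaSet M m δ) ≤ (K - (n : ℝ) * b) / (m : ℝ) := by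
      apply csSup_le (hneS m)
      intro a ha
      rw [le_div_iff₀ hmR]
      have := key a ha b hb
      linarith
    have h3' := (le_div_iff₀ hmR).mp h3
    linarith
  have h2' := (le_div_iff₀ hnR).mp h2
  linarith
end

section
/- (Dueck's Lemma) Fix ε, δ > 0, a positive integer n, finite sets 𝒰, 𝒳₁, 𝒳₂, and a joint pmf p(u, x₁ⁿ, x₂ⁿ) on 𝒰×𝒳₁ⁿ×𝒳₂ⁿ such that I(X₁ⁿ; X₂ⁿ | U) ≤ nδ. Then there exists a set T ⊆ {1,…,n} with |T| ≤ nδ/ε such that for every t ∉ T, I(X_{1t}; X_{2t} | U, X₁^T, X₂^T) ≤ ε, where X_i^T := (X_{it})_{t∈T}. -/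
open scoped BigOperators

/-- The joint pmf of `(U, X₁^T, X₂^T, X_{1t}, X_{2t})` induced by a joint pmf `p` of
`(U, X₁ⁿ, X₂ⁿ)`, with conditioning variable `(U, X₁^T, X₂^T)`. -/
def restrictPair {U X1 X2 : Type} [Fintype U] [Fintype X1] [Fintype X2]
    [DecidableEq X1] [DecidableEq X2] {n : ℕ}
    (p : U → (Fin n → X1) → (Fin n → X2) → ℝ) (T : Finset (Fin n)) (t : Fin n) :
    (U × ({s // s ∈ T} → X1) × ({s // s ∈ T} → X2)) → X1 → X2 → ℝ :=
  fun c a b =>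
    ∑ x1 : Fin n → X1, ∑ x2 : Fin n → X2,
      if (∀ s : {s // s ∈ T}, x1 s.1 = c.2.1 s) ∧ (∀ s : {s // s ∈ T}, x2 s.1 = c.2.2 s)
          ∧ x1 t = a ∧ x2 t = b
      then p c.1 x1 x2 else 0

section DueckDev

open Finset

/-- Key pointwise inequality. -/
theorem key_ineq (x y z w : ℝ) (hx : 0 ≤ x) (hy : 0 ≤ y) (hz : 0 ≤ z) (hw : 0 ≤ w)
    (hxy : x ≤ y) (hxz : x ≤ z) (hxw : x ≤ w) :
    (1 / Real.log 2) * (x - y * z / w) ≤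
      x * Real.logb 2 x + x * Real.logb 2 w - x * Real.logb 2 y - x * Real.logb 2 z := by
  have hlog2 : 0 < Real.log 2 := Real.log_pos (by norm_num)
  rcases eq_or_lt_of_le hx with h0 | hxpos
  · -- x = 0
    rw [← h0]
    simp only [zero_mul, add_zero, sub_zero, zero_sub, zero_add]
    have : 0 ≤ y * z / w := div_nonneg (mul_nonneg hy hz) hw
    have h1 : (1 / Real.log 2) * (0 - y * z / w) ≤ 0 := by
      apply mul_nonpos_of_nonneg_of_nonpos
      · positivity
      · linarith
    simpa using h1
  · have hy' : 0 < y := lt_of_lt_of_le hxpos hxy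
    have hz' : 0 < z := lt_of_lt_of_le hxpos hxz
    have hw' : 0 < w := lt_of_lt_of_le hxpos hxw
    -- LHS in terms of Real.log
    have hlogb : ∀ t : ℝ, Real.logb 2 t = Real.log t / Real.log 2 := fun t => rfl
    have ht : 0 < x * w / (y * z) := by positivity
    have hlogt : Real.log (x * w / (y * z)) = Real.log x + Real.log w - Real.log y - Real.log z := by
      rw [Real.log_div (by positivity) (by positivity), Real.log_mul (ne_of_gt hxpos) (ne_of_gt hw'),
        Real.log_mul (ne_of_gt hy') (ne_of_gt hz')]
      ring
    -- log t ≥ 1 - 1/t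
    have hbound : 1 - 1 / (x * w / (y * z)) ≤ Real.log (x * w / (y * z)) := by
      have := Real.log_le_sub_one_of_pos (show (0:ℝ) < (x * w / (y * z))⁻¹ by positivity)
      rw [Real.log_inv] at this
      have h2 : (x * w / (y * z))⁻¹ = 1 / (x * w / (y * z)) := (one_div _).symm
      linarith [this]
    have hxt : x * (1 - 1 / (x * w / (y * z))) = x - y * z / w := by
      field_simp
    have hmul : x * (1 - 1 / (x * w / (y * z))) ≤ x * Real.log (x * w / (y * z)) :=
      mul_le_mul_of_nonneg_left hbound hx
    rw [hxt, hlogt] at hmul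
    have final : (1 / Real.log 2) * (x - y * z / w)
        ≤ (1 / Real.log 2) * (x * (Real.log x + Real.log w - Real.log y - Real.log z)) := by
      apply mul_le_mul_of_nonneg_left _ (by positivity)
      linarith
    calc (1 / Real.log 2) * (x - y * z / w)
        ≤ (1 / Real.log 2) * (x * (Real.log x + Real.log w - Real.log y - Real.log z)) := final
      _ = x * Real.logb 2 x + x * Real.logb 2 w - x * Real.logb 2 y - x * Real.logb 2 z := by
          simp only [hlogb]
          field_simp

theorem condMI_nonneg {U A B : Type} [Fintype U] [Fintype A] [Fintype B]
    (p : U → A → B → ℝ) (hp : ∀ u a b, 0 ≤ p u a b) : 0 ≤ condMI p := by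
  classical
  have e1 : ent2 (fun ua : U × A => ∑ b, p ua.1 ua.2 b)
      = -∑ u, ∑ a, ∑ b, p u a b * Real.logb 2 (∑ b', p u a b') := by
    unfold ent2
    rw [Fintype.sum_prod_type]
    congr 1
    exact Finset.sum_congr rfl fun u _ => Finset.sum_congr rfl fun a _ => Finset.sum_mul _ _ _
  have e2 : ent2 (fun ub : U × B => ∑ a, p ub.1 a ub.2)
      = -∑ u, ∑ a, ∑ b, p u a b * Real.logb 2 (∑ a', p u a' b) := by
    unfold ent2
    rw [Fintype.sum_prod_type]
    congr 1
    refine Finset.sum_congr rfl fun u _ => ?_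
    rw [Finset.sum_comm]
    exact Finset.sum_congr rfl fun b _ => Finset.sum_mul _ _ _
  have e3 : ent2 (fun uab : U × A × B => p uab.1 uab.2.1 uab.2.2)
      = -∑ u, ∑ a, ∑ b, p u a b * Real.logb 2 (p u a b) := by
    unfold ent2
    rw [Fintype.sum_prod_type]
    congr 1
    exact Finset.sum_congr rfl fun u _ => Fintype.sum_prod_type _
  have e4 : ent2 (fun u : U => ∑ a, ∑ b, p u a b)
      = -∑ u, ∑ a, ∑ b, p u a b * Real.logb 2 (∑ a', ∑ b', p u a' b') := by
    unfold ent2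
    congr 1
    refine Finset.sum_congr rfl fun u _ => ?_
    rw [Finset.sum_mul]
    exact Finset.sum_congr rfl fun a _ => Finset.sum_mul _ _ _
  have combo : condMI p = ∑ u, ∑ a, ∑ b,
      (p u a b * Real.logb 2 (p u a b)
        + p u a b * Real.logb 2 (∑ a', ∑ b', p u a' b')
        - p u a b * Real.logb 2 (∑ b', p u a b')
        - p u a b * Real.logb 2 (∑ a', p u a' b)) := by
    unfold condMI
    rw [e1, e2, e3, e4]
    simp only [Finset.sum_sub_distrib, Finset.sum_add_distrib]
    ring
  have hzero : ∑ u, ∑ a, ∑ b, (1 / Real.log 2) *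
      (p u a b - (∑ b', p u a b') * (∑ a', p u a' b) / (∑ a', ∑ b', p u a' b')) = 0 := by
    apply Finset.sum_eq_zero
    intro u _
    have inner : ∀ a, ∑ b, (1 / Real.log 2) *
        (p u a b - (∑ b', p u a b') * (∑ a', p u a' b) / (∑ a', ∑ b', p u a' b'))
        = (1 / Real.log 2) * ((∑ b', p u a b')
            - (∑ b', p u a b') * ((∑ a', ∑ b', p u a' b') / (∑ a', ∑ b', p u a' b'))) := by
      intro a
      rw [← Finset.mul_sum]
      congr 1
      rw [Finset.sum_sub_distrib]
      congr 1
      rw [← Finset.sum_div, ← Finset.mul_sum]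
      rw [show ∑ b, (∑ a', p u a' b) = ∑ a', ∑ b', p u a' b' from Finset.sum_comm]
      rw [mul_div_assoc]
    simp only [inner]
    rw [← Finset.mul_sum]
    rcases eq_or_ne (∑ a', ∑ b', p u a' b') 0 with h | h
    · simp [h]
    · rw [div_self h]
      simp
  have hle : ∀ u a b, (1 / Real.log 2) *
      (p u a b - (∑ b', p u a b') * (∑ a', p u a' b) / (∑ a', ∑ b', p u a' b'))
      ≤ (p u a b * Real.logb 2 (p u a b)
        + p u a b * Real.logb 2 (∑ a', ∑ b', p u a' b')
        - p u a b * Real.logb 2 (∑ b', p u a b')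
        - p u a b * Real.logb 2 (∑ a', p u a' b)) := by
    intro u a b
    apply key_ineq
    · exact hp u a b
    · exact Finset.sum_nonneg fun b' _ => hp u a b'
    · exact Finset.sum_nonneg fun a' _ => hp u a' b
    · exact Finset.sum_nonneg fun a' _ => Finset.sum_nonneg fun b' _ => hp u a' b'
    · exact Finset.single_le_sum (fun b' _ => hp u a b') (Finset.mem_univ b)
    · exact Finset.single_le_sum (fun a' _ => hp u a' b) (Finset.mem_univ a)
    · calc p u a b ≤ ∑ b', p u a b' :=
            Finset.single_le_sum (fun b' _ => hp u a b') (Finset.mem_univ b)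
        _ ≤ ∑ a', ∑ b', p u a' b' :=
            Finset.single_le_sum (fun a' _ => Finset.sum_nonneg fun b' _ => hp u a' b')
              (Finset.mem_univ a)
  rw [combo, ← hzero]
  exact Finset.sum_le_sum fun u _ => Finset.sum_le_sum fun a _ => Finset.sum_le_sum fun b _ =>
    hle u a b

section DueckAux
variable {Ω : Type} [Fintype Ω]

noncomputable def pushf (q : Ω → ℝ) {α : Type} [Fintype α] [DecidableEq α] (f : Ω → α) : α → ℝ :=
  fun a => ∑ ω, if f ω = a then q ω else 0

noncomputable def Hq (q : Ω → ℝ) {α : Type} [Fintype α] [DecidableEq α] (f : Ω → α) : ℝ :=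
  ent2 (pushf q f)

noncomputable def MI3 (q : Ω → ℝ) {α β γ : Type} [Fintype α] [Fintype β] [Fintype γ]
    [DecidableEq α] [DecidableEq β] [DecidableEq γ]
    (A : Ω → α) (B : Ω → β) (C : Ω → γ) : ℝ :=
  Hq q (fun ω => (C ω, A ω)) + Hq q (fun ω => (C ω, B ω))
    - Hq q (fun ω => (C ω, A ω, B ω)) - Hq q C

theorem sum_ite_pair {β : Type} [Fintype β] [DecidableEq β] (P : Prop) [Decidable P]
    (b0 : β) (r : ℝ) : (∑ b, if P ∧ b0 = b then r else 0) = if P then r else 0 := by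
  by_cases h : P
  · simp [h]
  · simp [h]

theorem condMI_pushf (q : Ω → ℝ)
    {α β γ : Type} [Fintype α] [Fintype β] [Fintype γ]
    [DecidableEq α] [DecidableEq β] [DecidableEq γ]
    (A : Ω → α) (B : Ω → β) (C : Ω → γ) :
    condMI (fun c a b => pushf q (fun ω => (C ω, A ω, B ω)) (c, a, b)) = MI3 q A B C := by
  unfold condMI MI3 Hq
  have h1 : (fun ca : γ × α => ∑ b, pushf q (fun ω => (C ω, A ω, B ω)) (ca.1, ca.2, b))
      = pushf q (fun ω => (C ω, A ω)) := by
    funext ca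
    unfold pushf
    rw [Finset.sum_comm]
    refine Finset.sum_congr rfl fun ω _ => ?_
    have : ∀ b, ((C ω, A ω, B ω) = (ca.1, ca.2, b)) = (((C ω, A ω) = ca) ∧ B ω = b) := by
      intro b
      simp [Prod.ext_iff, and_assoc]
    simp only [this]
    exact sum_ite_pair _ (B ω) (q ω)
  have h2 : (fun cb : γ × β => ∑ a, pushf q (fun ω => (C ω, A ω, B ω)) (cb.1, a, cb.2))
      = pushf q (fun ω => (C ω, B ω)) := by
    funext cb
    unfold pushf
    rw [Finset.sum_comm]
    refine Finset.sum_congr rfl fun ω _ => ?_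
    have : ∀ a, ((C ω, A ω, B ω) = (cb.1, a, cb.2)) = (((C ω, B ω) = cb) ∧ A ω = a) := by
      intro a
      simp [Prod.ext_iff]
      tauto
    simp only [this]
    exact sum_ite_pair _ (A ω) (q ω)
  have h3 : (fun cab : γ × α × β =>
        pushf q (fun ω => (C ω, A ω, B ω)) (cab.1, cab.2.1, cab.2.2))
      = pushf q (fun ω => (C ω, A ω, B ω)) := rfl
  have h4 : (fun c : γ => ∑ a, ∑ b, pushf q (fun ω => (C ω, A ω, B ω)) (c, a, b))
      = pushf q C := by
    funext c
    unfold pushf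
    have e1 : ∀ ω a b, ((C ω, A ω, B ω) = (c, a, b)) = ((C ω = c ∧ A ω = a) ∧ B ω = b) := by
      intro ω a b
      simp [Prod.ext_iff]
      tauto
    calc (∑ a, ∑ b, ∑ ω, if (C ω, A ω, B ω) = (c, a, b) then q ω else 0)
        = ∑ ω, ∑ a, ∑ b, if (C ω, A ω, B ω) = (c, a, b) then q ω else 0 := by
          rw [show (∑ a, ∑ b, ∑ ω, if (C ω, A ω, B ω) = (c, a, b) then q ω else 0)
              = ∑ a, ∑ ω, ∑ b, if (C ω, A ω, B ω) = (c, a, b) then q ω else 0 from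
            Finset.sum_congr rfl fun a _ => Finset.sum_comm]
          exact Finset.sum_comm
      _ = ∑ ω, if C ω = c then q ω else 0 := by
          refine Finset.sum_congr rfl fun ω _ => ?_
          simp only [e1]
          rw [show (∑ a, ∑ b, if (C ω = c ∧ A ω = a) ∧ B ω = b then q ω else 0)
              = ∑ a, if C ω = c ∧ A ω = a then q ω else 0 from
            Finset.sum_congr rfl fun a _ => sum_ite_pair _ (B ω) (q ω)]
          exact sum_ite_pair _ (A ω) (q ω)
  beta_reduce
  rw [h1, h2, h3, h4]


theorem pushf_nonneg (q : Ω → ℝ) (hq : ∀ ω, 0 ≤ q ω) {α : Type} [Fintype α] [DecidableEq α]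
    (f : Ω → α) (a : α) : 0 ≤ pushf q f a :=
  Finset.sum_nonneg fun ω _ => by by_cases h : f ω = a <;> simp [h, hq ω]

theorem Hq_comp_inj (q : Ω → ℝ) {α β : Type} [Fintype α] [Fintype β]
    [DecidableEq α] [DecidableEq β] (f : Ω → α) (e : α → β) (he : Function.Injective e) :
    Hq q (fun ω => e (f ω)) = Hq q f := by
  unfold Hq ent2
  congr 1
  set F : β → ℝ := fun b => pushf q (fun ω => e (f ω)) b * Real.logb 2 (pushf q (fun ω => e (f ω)) b) with hF
  calc ∑ b : β, F b
      = ∑ b ∈ (univ : Finset α).image e, F b := by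
        refine (Finset.sum_subset (Finset.subset_univ _) ?_).symm
        intro b _ hb
        have : pushf q (fun ω => e (f ω)) b = 0 := by
          unfold pushf
          apply Finset.sum_eq_zero
          intro ω _
          rw [if_neg]
          intro h
          exact hb (Finset.mem_image.2 ⟨f ω, Finset.mem_univ _, h⟩)
        simp [hF, this]
    _ = ∑ a : α, F (e a) := Finset.sum_image (fun a _ a' _ h => he h)
    _ = ∑ a : α, pushf q f a * Real.logb 2 (pushf q f a) := by
        apply Finset.sum_congr rfl
        intro a _
        have : pushf q (fun ω => e (f ω)) (e a) = pushf q f a := by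
          unfold pushf
          apply Finset.sum_congr rfl
          intro ω _
          simp [he.eq_iff]
        simp [hF, this]

theorem MI3_comp_inj (q : Ω → ℝ) {α β γ α' β' γ' : Type}
    [Fintype α] [Fintype β] [Fintype γ] [Fintype α'] [Fintype β'] [Fintype γ']
    [DecidableEq α] [DecidableEq β] [DecidableEq γ]
    [DecidableEq α'] [DecidableEq β'] [DecidableEq γ']
    (A : Ω → α) (B : Ω → β) (C : Ω → γ)
    (e₁ : α → α') (e₂ : β → β') (e₃ : γ → γ')
    (h₁ : Function.Injective e₁) (h₂ : Function.Injective e₂) (h₃ : Function.Injective e₃) :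
    MI3 q (fun ω => e₁ (A ω)) (fun ω => e₂ (B ω)) (fun ω => e₃ (C ω)) = MI3 q A B C := by
  unfold MI3
  have ha : Hq q (fun ω => (e₃ (C ω), e₁ (A ω))) = Hq q (fun ω => (C ω, A ω)) :=
    Hq_comp_inj q (fun ω => (C ω, A ω)) (Prod.map e₃ e₁) (h₃.prodMap h₁)
  have hb : Hq q (fun ω => (e₃ (C ω), e₂ (B ω))) = Hq q (fun ω => (C ω, B ω)) :=
    Hq_comp_inj q (fun ω => (C ω, B ω)) (Prod.map e₃ e₂) (h₃.prodMap h₂)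
  have hc : Hq q (fun ω => (e₃ (C ω), e₁ (A ω), e₂ (B ω))) = Hq q (fun ω => (C ω, A ω, B ω)) :=
    Hq_comp_inj q (fun ω => (C ω, A ω, B ω)) (Prod.map e₃ (Prod.map e₁ e₂))
      (h₃.prodMap (h₁.prodMap h₂))
  have hd : Hq q (fun ω => e₃ (C ω)) = Hq q C := Hq_comp_inj q C e₃ h₃
  rw [ha, hb, hc, hd]

theorem MI3_nonneg (q : Ω → ℝ) (hq : ∀ ω, 0 ≤ q ω) {α β γ : Type}
    [Fintype α] [Fintype β] [Fintype γ]
    [DecidableEq α] [DecidableEq β] [DecidableEq γ]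
    (A : Ω → α) (B : Ω → β) (C : Ω → γ) : 0 ≤ MI3 q A B C := by
  rw [← condMI_pushf q A B C]
  exact condMI_nonneg _ fun c a b => pushf_nonneg q hq _ _

theorem sum_ite_pair' {β : Type} [Fintype β] [DecidableEq β] (P : Prop) [Decidable P]
    (b0 : β) (f : β → ℝ) : (∑ b, if P ∧ b0 = b then f b else 0) = if P then f b0 else 0 := by
  by_cases h : P
  · simp [h]
  · simp [h]

theorem injLI {α β : Type} (e : α → β) (g : β → α) (h : ∀ x, g (e x) = x) :
    Function.Injective e := Function.LeftInverse.injective h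

theorem MI3_chain (q : Ω → ℝ) (hq : ∀ ω, 0 ≤ q ω)
    {α α' β β' γ : Type} [Fintype α] [Fintype α'] [Fintype β] [Fintype β'] [Fintype γ]
    [DecidableEq α] [DecidableEq α'] [DecidableEq β] [DecidableEq β'] [DecidableEq γ]
    (A : Ω → α) (A' : Ω → α') (B : Ω → β) (B' : Ω → β') (Cv : Ω → γ) :
    MI3 q A B Cv + MI3 q A' B' (fun ω => (Cv ω, A ω, B ω))
      ≤ MI3 q (fun ω => (A ω, A' ω)) (fun ω => (B ω, B' ω)) Cv := by
  have hn1 : 0 ≤ MI3 q A' B (fun ω => (Cv ω, A ω)) := MI3_nonneg q hq _ _ _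
  have hn2 : 0 ≤ MI3 q A B' (fun ω => (Cv ω, B ω)) := MI3_nonneg q hq _ _ _
  have r1 : Hq q (fun ω => ((Cv ω, A ω), A' ω)) = Hq q (fun ω => (Cv ω, A ω, A' ω)) :=
    Hq_comp_inj q (fun ω => (Cv ω, A ω, A' ω)) (fun x => ((x.1, x.2.1), x.2.2))
      (injLI _ (fun y => (y.1.1, y.1.2, y.2)) fun x => rfl)
  have r2 : Hq q (fun ω => ((Cv ω, B ω), B' ω)) = Hq q (fun ω => (Cv ω, B ω, B' ω)) :=
    Hq_comp_inj q (fun ω => (Cv ω, B ω, B' ω)) (fun x => ((x.1, x.2.1), x.2.2))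
      (injLI _ (fun y => (y.1.1, y.1.2, y.2)) fun x => rfl)
  have r3 : Hq q (fun ω => ((Cv ω, A ω), B ω)) = Hq q (fun ω => (Cv ω, A ω, B ω)) :=
    Hq_comp_inj q (fun ω => (Cv ω, A ω, B ω)) (fun x => ((x.1, x.2.1), x.2.2))
      (injLI _ (fun y => (y.1.1, y.1.2, y.2)) fun x => rfl)
  have r4 : Hq q (fun ω => ((Cv ω, B ω), A ω)) = Hq q (fun ω => (Cv ω, A ω, B ω)) :=
    Hq_comp_inj q (fun ω => (Cv ω, A ω, B ω)) (fun x => ((x.1, x.2.2), x.2.1))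
      (injLI _ (fun y => (y.1.1, y.2, y.1.2)) fun x => rfl)
  have r5 : Hq q (fun ω => ((Cv ω, A ω, B ω), A' ω)) = Hq q (fun ω => (Cv ω, A ω, A' ω, B ω)) :=
    Hq_comp_inj q (fun ω => (Cv ω, A ω, A' ω, B ω))
      (fun x => ((x.1, x.2.1, x.2.2.2), x.2.2.1))
      (injLI _ (fun y => (y.1.1, y.1.2.1, y.2, y.1.2.2)) fun x => rfl)
  have r6 : Hq q (fun ω => ((Cv ω, A ω), A' ω, B ω)) = Hq q (fun ω => (Cv ω, A ω, A' ω, B ω)) :=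
    Hq_comp_inj q (fun ω => (Cv ω, A ω, A' ω, B ω))
      (fun x => ((x.1, x.2.1), x.2.2.1, x.2.2.2))
      (injLI _ (fun y => (y.1.1, y.1.2, y.2.1, y.2.2)) fun x => rfl)
  have r7 : Hq q (fun ω => ((Cv ω, A ω, B ω), B' ω)) = Hq q (fun ω => (Cv ω, A ω, B ω, B' ω)) :=
    Hq_comp_inj q (fun ω => (Cv ω, A ω, B ω, B' ω))
      (fun x => ((x.1, x.2.1, x.2.2.1), x.2.2.2))
      (injLI _ (fun y => (y.1.1, y.1.2.1, y.1.2.2, y.2)) fun x => rfl)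
  have r8 : Hq q (fun ω => ((Cv ω, B ω), A ω, B' ω)) = Hq q (fun ω => (Cv ω, A ω, B ω, B' ω)) :=
    Hq_comp_inj q (fun ω => (Cv ω, A ω, B ω, B' ω))
      (fun x => ((x.1, x.2.2.1), x.2.1, x.2.2.2))
      (injLI _ (fun y => (y.1.1, y.2.1, y.1.2, y.2.2)) fun x => rfl)
  have r9 : Hq q (fun ω => ((Cv ω, A ω, B ω), A' ω, B' ω))
      = Hq q (fun ω => (Cv ω, A ω, A' ω, B ω, B' ω)) :=
    Hq_comp_inj q (fun ω => (Cv ω, A ω, A' ω, B ω, B' ω))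
      (fun x => ((x.1, x.2.1, x.2.2.2.1), x.2.2.1, x.2.2.2.2))
      (injLI _ (fun y => (y.1.1, y.1.2.1, y.2.1, y.1.2.2, y.2.2)) fun x => rfl)
  have r10 : Hq q (fun ω => (Cv ω, (A ω, A' ω), (B ω, B' ω)))
      = Hq q (fun ω => (Cv ω, A ω, A' ω, B ω, B' ω)) :=
    Hq_comp_inj q (fun ω => (Cv ω, A ω, A' ω, B ω, B' ω))
      (fun x => (x.1, (x.2.1, x.2.2.1), (x.2.2.2.1, x.2.2.2.2)))
      (injLI _ (fun y => (y.1, y.2.1.1, y.2.1.2, y.2.2.1, y.2.2.2)) fun x => rfl)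
  have hid : MI3 q (fun ω => (A ω, A' ω)) (fun ω => (B ω, B' ω)) Cv
      = MI3 q A B Cv + MI3 q A' B' (fun ω => (Cv ω, A ω, B ω))
        + MI3 q A' B (fun ω => (Cv ω, A ω)) + MI3 q A B' (fun ω => (Cv ω, B ω)) := by
    unfold MI3
    rw [r1, r2, r3, r4, r5, r6, r7, r8, r9, r10]
    ring
  linarith

/-- Restriction of a tuple to a subset of coordinates. -/
def restrV {X : Type} {n : ℕ} (T : Finset (Fin n)) (x : Fin n → X) : {s // s ∈ T} → X :=
  fun s => x s.1

end DueckAux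

end DueckDev


/-- **Dueck's Lemma.** Fix `ε, δ > 0`, a positive integer `n`, finite sets
`𝒰, 𝒳₁, 𝒳₂`, and a joint pmf `p(u,x₁ⁿ,x₂ⁿ)` with `I(X₁ⁿ;X₂ⁿ|U) ≤ nδ`. Then there is a set
`T ⊆ {1,…,n}` with `|T| ≤ nδ/ε` such that `I(X_{1t};X_{2t}|U,X₁^T,X₂^T) ≤ ε` for every
`t ∉ T`. -/
theorem dueck_lemma
    {U X1 X2 : Type} [Fintype U] [Fintype X1] [Fintype X2]
    [DecidableEq X1] [DecidableEq X2]
    (n : ℕ) (hn : 1 ≤ n) (ε δ : ℝ) (hε : 0 < ε) (hδ : 0 < δ)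
    (p : U → (Fin n → X1) → (Fin n → X2) → ℝ) (hp : IsPMF3 p)
    (hMI : condMI p ≤ (n : ℝ) * δ) :
    ∃ T : Finset (Fin n), (T.card : ℝ) ≤ (n : ℝ) * δ / ε ∧
      ∀ t ∉ T, condMI (restrictPair p T t) ≤ ε := by
  classical
  obtain ⟨hp1, hp2⟩ := hp
  set q : U × (Fin n → X1) × (Fin n → X2) → ℝ := fun ω => p ω.1 ω.2.1 ω.2.2 with hqdef
  have hq : ∀ ω, 0 ≤ q ω := fun ω => hp1 _ _ _
  -- condMI p as an MI3
  have hP : (fun (c : U) (a : Fin n → X1) (b : Fin n → X2) =>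
      pushf q (fun ω : U × (Fin n → X1) × (Fin n → X2) => (ω.1, ω.2.1, ω.2.2)) (c, a, b)) = p := by
    funext c a b
    unfold pushf
    simp only [show ∀ ω : U × (Fin n → X1) × (Fin n → X2),
        ((ω.1, ω.2.1, ω.2.2) : U × (Fin n → X1) × (Fin n → X2)) = ω from fun _ => rfl]
    simp [Finset.sum_ite_eq', hqdef]
  have hK1 : condMI p = MI3 q (fun ω => ω.2.1) (fun ω => ω.2.2) (fun ω => ω.1) := by
    rw [← hP]
    exact condMI_pushf q _ _ _
  -- condMI of restrictPair as an MI3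
  have hRP : ∀ (T : Finset (Fin n)) (t : Fin n),
      condMI (restrictPair p T t) = MI3 q (fun ω => ω.2.1 t) (fun ω => ω.2.2 t)
        (fun ω => (ω.1, restrV T ω.2.1, restrV T ω.2.2)) := by
    intro T t
    have heq : restrictPair p T t = fun c a b =>
        pushf q (fun ω : U × (Fin n → X1) × (Fin n → X2) =>
          ((ω.1, restrV T ω.2.1, restrV T ω.2.2), ω.2.1 t, ω.2.2 t)) (c, a, b) := by
      funext c a b
      unfold restrictPair pushf
      simp only [Fintype.sum_prod_type]
      have hcond : ∀ (u : U) (x1 : Fin n → X1) (x2 : Fin n → X2),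
          (((u, restrV T x1, restrV T x2), x1 t, x2 t) = (c, a, b))
          = (((∀ s : {s // s ∈ T}, x1 s.1 = c.2.1 s) ∧ (∀ s : {s // s ∈ T}, x2 s.1 = c.2.2 s)
              ∧ x1 t = a ∧ x2 t = b) ∧ c.1 = u) := by
        intro u x1 x2
        rw [eq_iff_iff]
        simp only [Prod.ext_iff, funext_iff, restrV]
        tauto
      simp only [hcond]
      rw [show (∑ u, ∑ x1, ∑ x2, if ((∀ s : {s // s ∈ T}, x1 s.1 = c.2.1 s)
              ∧ (∀ s : {s // s ∈ T}, x2 s.1 = c.2.2 s) ∧ x1 t = a ∧ x2 t = b) ∧ c.1 = u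
            then q (u, x1, x2) else 0)
          = ∑ x1, ∑ u, ∑ x2, if ((∀ s : {s // s ∈ T}, x1 s.1 = c.2.1 s)
              ∧ (∀ s : {s // s ∈ T}, x2 s.1 = c.2.2 s) ∧ x1 t = a ∧ x2 t = b) ∧ c.1 = u
            then q (u, x1, x2) else 0 from Finset.sum_comm]
      refine Finset.sum_congr rfl fun x1 _ => ?_
      rw [show (∑ u, ∑ x2, if ((∀ s : {s // s ∈ T}, x1 s.1 = c.2.1 s)
              ∧ (∀ s : {s // s ∈ T}, x2 s.1 = c.2.2 s) ∧ x1 t = a ∧ x2 t = b) ∧ c.1 = u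
            then q (u, x1, x2) else 0)
          = ∑ x2, ∑ u, if ((∀ s : {s // s ∈ T}, x1 s.1 = c.2.1 s)
              ∧ (∀ s : {s // s ∈ T}, x2 s.1 = c.2.2 s) ∧ x1 t = a ∧ x2 t = b) ∧ c.1 = u
            then q (u, x1, x2) else 0 from Finset.sum_comm]
      refine Finset.sum_congr rfl fun x2 _ => ?_
      rw [sum_ite_pair' _ c.1 (fun u => q (u, x1, x2))]
    rw [heq]
    exact condMI_pushf q _ _ _
  -- the function g
  set g : Finset (Fin n) → ℝ := fun T =>
    MI3 q (fun ω => restrV T ω.2.1) (fun ω => restrV T ω.2.2) (fun ω => ω.1) with hgdef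
  have hg_nonneg : ∀ T, 0 ≤ g T := fun T => MI3_nonneg q hq _ _ _
  have hRP_nonneg : ∀ (T : Finset (Fin n)) (t : Fin n), 0 ≤ condMI (restrictPair p T t) := by
    intro T t
    rw [hRP]
    exact MI3_nonneg q hq _ _ _
  -- key step
  have hKey : ∀ (T : Finset (Fin n)) (t : Fin n), t ∉ T →
      g T + condMI (restrictPair p T t) ≤ g (insert t T) := by
    intro T t ht
    have hchain := MI3_chain q hq (fun ω : U × (Fin n → X1) × (Fin n → X2) => restrV T ω.2.1)
      (fun ω => ω.2.1 t) (fun ω => restrV T ω.2.2) (fun ω => ω.2.2 t) (fun ω => ω.1)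
    -- identify the RHS of the chain with g (insert t T)
    have he1 : Function.Injective (fun fx : ({s // s ∈ T} → X1) × X1 =>
        (fun s : {s // s ∈ insert t T} =>
          if h : s.1 ∈ T then fx.1 ⟨s.1, h⟩ else fx.2)) := by
      intro x y h
      have hx2 := congrFun h ⟨t, Finset.mem_insert_self t T⟩
      simp only [dif_neg ht] at hx2
      have hx1 : x.1 = y.1 := by
        funext s
        have := congrFun h ⟨s.1, Finset.mem_insert_of_mem s.2⟩
        simpa [dif_pos s.2] using this
      exact Prod.ext hx1 hx2
    have he2 : Function.Injective (fun fx : ({s // s ∈ T} → X2) × X2 =>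
        (fun s : {s // s ∈ insert t T} =>
          if h : s.1 ∈ T then fx.1 ⟨s.1, h⟩ else fx.2)) := by
      intro x y h
      have hx2 := congrFun h ⟨t, Finset.mem_insert_self t T⟩
      simp only [dif_neg ht] at hx2
      have hx1 : x.1 = y.1 := by
        funext s
        have := congrFun h ⟨s.1, Finset.mem_insert_of_mem s.2⟩
        simpa [dif_pos s.2] using this
      exact Prod.ext hx1 hx2
    have hcmp := MI3_comp_inj q
      (fun ω : U × (Fin n → X1) × (Fin n → X2) => (restrV T ω.2.1, ω.2.1 t))
      (fun ω => (restrV T ω.2.2, ω.2.2 t)) (fun ω => ω.1)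
      (fun fx => (fun s : {s // s ∈ insert t T} =>
          if h : s.1 ∈ T then fx.1 ⟨s.1, h⟩ else fx.2))
      (fun fx => (fun s : {s // s ∈ insert t T} =>
          if h : s.1 ∈ T then fx.1 ⟨s.1, h⟩ else fx.2))
      id he1 he2 Function.injective_id
    have hfun1 : (fun ω : U × (Fin n → X1) × (Fin n → X2) =>
        (fun s : {s // s ∈ insert t T} =>
          if h : s.1 ∈ T then (restrV T ω.2.1, ω.2.1 t).1 ⟨s.1, h⟩ else (restrV T ω.2.1, ω.2.1 t).2))
        = fun ω => restrV (insert t T) ω.2.1 := by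
      funext ω
      funext s
      by_cases h : s.1 ∈ T
      · simp [restrV, h]
      · have hst : s.1 = t := by
          have := s.2
          rw [Finset.mem_insert] at this
          tauto
        simp [restrV, h, hst]
    have hfun2 : (fun ω : U × (Fin n → X1) × (Fin n → X2) =>
        (fun s : {s // s ∈ insert t T} =>
          if h : s.1 ∈ T then (restrV T ω.2.2, ω.2.2 t).1 ⟨s.1, h⟩ else (restrV T ω.2.2, ω.2.2 t).2))
        = fun ω => restrV (insert t T) ω.2.2 := by
      funext ω
      funext s
      by_cases h : s.1 ∈ T
      · simp [restrV, h]
      · have hst : s.1 = t := by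
          have := s.2
          rw [Finset.mem_insert] at this
          tauto
        simp [restrV, h, hst]
    rw [hfun1, hfun2] at hcmp
    rw [hRP, hgdef]
    simp only [id_eq] at hcmp
    calc MI3 q (fun ω => restrV T ω.2.1) (fun ω => restrV T ω.2.2) (fun ω => ω.1)
          + MI3 q (fun ω => ω.2.1 t) (fun ω => ω.2.2 t)
            (fun ω => (ω.1, restrV T ω.2.1, restrV T ω.2.2))
        ≤ MI3 q (fun ω => (restrV T ω.2.1, ω.2.1 t)) (fun ω => (restrV T ω.2.2, ω.2.2 t))
            (fun ω => ω.1) := hchain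
      _ = MI3 q (fun ω => restrV (insert t T) ω.2.1) (fun ω => restrV (insert t T) ω.2.2)
            (fun ω => ω.1) := hcmp.symm
  -- monotone up to univ
  have hg_univ : g Finset.univ = condMI p := by
    have h1 : Function.Injective (restrV (Finset.univ : Finset (Fin n)) (X := X1)) := by
      intro x y h
      funext i
      exact congrFun h ⟨i, Finset.mem_univ i⟩
    have h2 : Function.Injective (restrV (Finset.univ : Finset (Fin n)) (X := X2)) := by
      intro x y h
      funext i
      exact congrFun h ⟨i, Finset.mem_univ i⟩
    have := MI3_comp_inj q (fun ω : U × (Fin n → X1) × (Fin n → X2) => ω.2.1)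
      (fun ω => ω.2.2) (fun ω => ω.1) (restrV Finset.univ) (restrV Finset.univ) id
      h1 h2 Function.injective_id
    simp only [id_eq] at this
    rw [hgdef, hK1]
    exact this
  have hg_le : ∀ T : Finset (Fin n), g T ≤ condMI p := by
    have main : ∀ (k : ℕ) (T : Finset (Fin n)), n - T.card ≤ k → g T ≤ condMI p := by
      intro k
      induction k with
      | zero =>
        intro T hT
        have hcard : T.card = n := by
          have := T.card_le_univ
          simp only [Finset.card_univ, Fintype.card_fin] at this
          omega
        have : T = Finset.univ := Finset.eq_univ_of_card T (by simpa using hcard)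
        rw [this, hg_univ]
      | succ k ih =>
        intro T hT
        by_cases hTu : T = Finset.univ
        · rw [hTu, hg_univ]
        · obtain ⟨t, ht⟩ : ∃ t, t ∉ T := by
            by_contra h
            push_neg at h
            exact hTu (Finset.eq_univ_iff_forall.2 h)
          have h1 : g T ≤ g (insert t T) := by
            have := hKey T t ht
            have := hRP_nonneg T t
            linarith
          have h2 : g (insert t T) ≤ condMI p := by
            apply ih
            rw [Finset.card_insert_of_notMem ht]
            have : T.card < n := by
              have := T.card_le_univ
              simp only [Finset.card_univ, Fintype.card_fin] at this
              rcases lt_or_eq_of_le this with h | h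
              · exact h
              · exact absurd (Finset.eq_univ_of_card T (by simpa using h)) hTu
            omega
          linarith
    intro T
    exact main n T (by omega)
  -- greedy construction
  have main : ∀ (k : ℕ) (T : Finset (Fin n)), n - T.card ≤ k → ε * T.card ≤ g T →
      ∃ T' : Finset (Fin n), ε * T'.card ≤ g T' ∧
        ∀ t ∉ T', condMI (restrictPair p T' t) ≤ ε := by
    intro k
    induction k with
    | zero =>
      intro T hT hgT
      refine ⟨T, hgT, fun t htT => absurd ?_ htT⟩
      have hcard : T.card = n := by
        have := T.card_le_univ
        simp only [Finset.card_univ, Fintype.card_fin] at this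
        omega
      have : T = Finset.univ := Finset.eq_univ_of_card T (by simpa using hcard)
      rw [this]
      exact Finset.mem_univ t
    | succ k ih =>
      intro T hT hgT
      by_cases hall : ∀ t ∉ T, condMI (restrictPair p T t) ≤ ε
      · exact ⟨T, hgT, hall⟩
      · push_neg at hall
        obtain ⟨t, htT, hgt⟩ := hall
        apply ih (insert t T)
        · rw [Finset.card_insert_of_notMem htT]
          have : T.card < n := by
            have := T.card_le_univ
            simp only [Finset.card_univ, Fintype.card_fin] at this
            by_contra hc
            push_neg at hc
            have : T.card = n := by omega
            have hTu : T = Finset.univ := Finset.eq_univ_of_card T (by simpa using this)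
            rw [hTu] at htT
            exact htT (Finset.mem_univ t)
          omega
        · rw [Finset.card_insert_of_notMem htT]
          push_cast
          have := hKey T t htT
          nlinarith [hKey T t htT]
  obtain ⟨T, hT1, hT2⟩ := main n ∅ (by simp) (by simpa using hg_nonneg ∅)
  refine ⟨T, ?_, hT2⟩
  rw [le_div_iff₀ hε]
  have : ε * T.card ≤ (n : ℝ) * δ := le_trans hT1 (le_trans (hg_le T) hMI)
  linarith
end

section
/- For any discrete memoryless multiple access channel and any δ ≥ 0, the supremum in the definition of σ₁(δ) may be restricted to sets 𝒰 with |𝒰| ≤ 2 without changing its value; that is, σ₁(δ) = sup over finite 𝒰 with |𝒰| ≤ 2 of max_{p∈𝒫⁽¹⁾_𝒰(δ)} I(X₁,X₂;Y|U). -/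
open scoped BigOperators

/-!
For a joint pmf `p(u, x₁, x₂)` with marginal `q(u)` and conditionals `s_u(x₁, x₂)`, both
`I(X₁;X₂|U)` and `I(X₁,X₂;Y|U)` are `q`-averages of functionals of `s_u`, so the pair of them is
the `q`-mean `m` of finitely many points `P_u` of the plane. It suffices that some point of a
segment `[P_i, P_j]` lies in the quadrant `{x ≤ m₁, y ≥ m₂}`: giving weights to `i` and `j` only
then yields a binary `U` with no larger constraint value and no smaller rate.

If no such segment exists, centre at `m`, split the points into those with `x ≤ 0` and those
with `x > 0`, and sum the cross products `x_j y_i - x_i y_j` over left–right pairs with weights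
`q_i q_j`. Every term is negative (its sign is that of the height where `[P_i, P_j]` crosses the
axis), yet the sum factors through the two centred means and vanishes.
-/

open Finset

lemma mul_logb_mul (x y : ℝ) :
    x * y * Real.logb 2 (x * y) = y * (x * Real.logb 2 x) + x * (y * Real.logb 2 y) := by
  rcases eq_or_ne x 0 with rfl | hx
  · simp
  rcases eq_or_ne y 0 with rfl | hy
  · simp
  rw [Real.logb_mul hx hy]
  ring

lemma ent2_const_mul {α : Type} [Fintype α] (c : ℝ) (f : α → ℝ) :
    ent2 (fun a => c * f a) = c * ent2 f - c * Real.logb 2 c * ∑ a, f a := by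
  simp only [ent2, mul_logb_mul, sum_add_distrib, ← sum_mul, ← mul_sum]
  ring

section MutualInfo

variable {U A B : Type} [Fintype U] [Fintype A] [Fintype B]

/-- `I(A;B)` of a joint mass function `r` on `A × B`; it need not be normalized, which makes
`mutualInfo` positively homogeneous (`mutualInfo_smul`). -/
noncomputable def mutualInfo (r : A → B → ℝ) : ℝ := condMI (fun _ : Unit => r)

lemma condMI_eq_sum_mutualInfo (p : U → A → B → ℝ) : condMI p = ∑ u, mutualInfo (p u) := by
  simp only [mutualInfo, condMI, ent2, Fintype.sum_prod_type, Fintype.sum_unique,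
    sum_add_distrib, sum_sub_distrib, sum_neg_distrib]

lemma mutualInfo_smul (c : ℝ) (r : A → B → ℝ) : mutualInfo (c • r) = c * mutualInfo r := by
  simp only [mutualInfo, condMI, Pi.smul_apply, smul_eq_mul, ← mul_sum]
  rw [ent2_const_mul, ent2_const_mul, ent2_const_mul, ent2_const_mul]
  simp only [Fintype.sum_prod_type, Fintype.sum_unique]
  rw [sum_comm (γ := A)]
  ring

end MutualInfo

section TwoPoint

variable {ι : Type} {q : ι → ℝ}

lemma sum_mul_neg_of_sum_pos {s : Finset ι} {f : ι → ℝ} (hq : ∀ i, 0 ≤ q i)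
    (hs : 0 < ∑ i ∈ s, q i) (hf : ∀ i ∈ s, 0 < q i → f i < 0) :
    ∑ i ∈ s, q i * f i < 0 := by
  obtain ⟨i, hi, hqi⟩ : ∃ i ∈ s, 0 < q i := by
    simpa using exists_lt_of_sum_lt (by simpa using hs : ∑ _i ∈ s, (0 : ℝ) < ∑ i ∈ s, q i)
  refine sum_neg' (fun j hj => ?_) ⟨i, hi, mul_neg_of_pos_of_neg hqi (hf i hi hqi)⟩
  rcases (hq j).eq_or_lt with hqj | hqj
  · simp [← hqj]
  · exact (mul_neg_of_pos_of_neg hqj (hf j hj hqj)).le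

lemma sum_mul_eq_zero_of_sum_eq_zero {s : Finset ι} (f : ι → ℝ) (hq : ∀ i, 0 ≤ q i)
    (hs : ∑ i ∈ s, q i = 0) : ∑ i ∈ s, q i * f i = 0 :=
  sum_eq_zero fun i hi => by rw [(sum_eq_zero_iff_of_nonneg fun j _ => hq j).1 hs i hi, zero_mul]

lemma exists_segment_point_on_axis {a₁ a₂ b₁ b₂ : ℝ} (ha : a₁ ≤ 0) (hb : 0 < b₁) :
    ∃ t : ℝ, 0 ≤ t ∧ t ≤ 1 ∧ t * a₁ + (1 - t) * b₁ = 0 ∧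
      (b₁ - a₁) * (t * a₂ + (1 - t) * b₂) = b₁ * a₂ - a₁ * b₂ := by
  have hd : 0 < b₁ - a₁ := by linarith
  refine ⟨b₁ / (b₁ - a₁), by positivity, (div_le_one hd).2 (by linarith), ?_, ?_⟩
  · field_simp; ring
  · field_simp; ring

variable [Fintype ι]

theorem exists_two_point_of_centered (x y : ι → ℝ) (hq : ∀ i, 0 ≤ q i) (hq1 : ∑ i, q i = 1)
    (hx : ∑ i, q i * x i = 0) (hy : ∑ i, q i * y i = 0) :
    ∃ i j t, 0 < q i ∧ 0 < q j ∧ 0 ≤ t ∧ t ≤ 1 ∧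
      t * x i + (1 - t) * x j ≤ 0 ∧ 0 ≤ t * y i + (1 - t) * y j := by
  by_contra! H
  have hneg : ∀ i, x i ≤ 0 → 0 < q i → y i < 0 := fun i hxi hqi => by
    simpa using H i i 1 hqi hqi zero_le_one le_rfl (by simpa using hxi)
  have hcross : ∀ i, x i ≤ 0 → 0 < q i → ∀ j, 0 < x j → 0 < q j →
      x j * y i - x i * y j < 0 := fun i hxi hqi j hxj hqj => by
    obtain ⟨t, ht0, ht1, hxt, hyt⟩ := exists_segment_point_on_axis (a₂ := y i) (b₂ := y j) hxi hxj
    rw [← hyt]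
    exact mul_neg_of_pos_of_neg (by linarith) (H i j t hqi hqj ht0 ht1 hxt.le)
  set L := univ.filter (fun i => x i ≤ 0)
  set R := univ.filter (fun i => ¬ x i ≤ 0)
  have hsplit : ∀ f : ι → ℝ, ∑ i ∈ L, f i + ∑ i ∈ R, f i = ∑ i, f i :=
    fun f => sum_filter_add_sum_filter_not _ _ _
  have hLy : 0 < ∑ i ∈ L, q i → ∑ i ∈ L, q i * y i < 0 := fun h =>
    sum_mul_neg_of_sum_pos hq h fun i hi => hneg i (mem_filter.1 hi).2
  have hRx : 0 < ∑ i ∈ R, q i → ∑ i ∈ R, q i * -x i < 0 := fun h =>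
    sum_mul_neg_of_sum_pos hq h fun i hi _ => by simpa using (mem_filter.1 hi).2
  have hRpos : 0 < ∑ i ∈ R, q i := by
    refine (sum_nonneg fun i _ => hq i).lt_of_ne fun h => ?_
    have := hsplit (fun i => q i * y i)
    rw [sum_mul_eq_zero_of_sum_eq_zero y hq h.symm] at this
    have := hsplit q
    linarith [hLy (by linarith)]
  have hLpos : 0 < ∑ i ∈ L, q i := by
    refine (sum_nonneg fun i _ => hq i).lt_of_ne fun h => ?_
    have := hsplit (fun i => q i * x i)
    rw [sum_mul_eq_zero_of_sum_eq_zero x hq h.symm] at this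
    simp only [mul_neg, sum_neg_distrib] at hRx
    linarith [hRx hRpos]
  have hD : ∑ i ∈ L, q i * ∑ j ∈ R, q j * (x j * y i - x i * y j) = 0 := by
    have e : ∀ i, q i * ∑ j ∈ R, q j * (x j * y i - x i * y j)
        = (q i * y i) * ∑ j ∈ R, q j * x j - (q i * x i) * ∑ j ∈ R, q j * y j := fun i => by
      simp only [mul_sum, ← sum_sub_distrib]
      exact sum_congr rfl fun j _ => by ring
    simp only [e, sum_sub_distrib, ← sum_mul]
    linear_combination (∑ j ∈ R, q j * x j) * hsplit (fun i => q i * y i) -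
      (∑ j ∈ R, q j * y j) * hsplit (fun i => q i * x i) + (∑ j ∈ R, q j * x j) * hy -
      (∑ j ∈ R, q j * y j) * hx
  refine hD.not_lt (sum_mul_neg_of_sum_pos hq hLpos fun i hi hqi => ?_)
  exact sum_mul_neg_of_sum_pos hq hRpos fun j hj hqj =>
    hcross i (mem_filter.1 hi).2 hqi j (not_le.1 (mem_filter.1 hj).2) hqj

theorem exists_two_point_mix (x y : ι → ℝ)
    (hq : ∀ i, 0 ≤ q i) (hq1 : ∑ i, q i = 1) :
    ∃ i j t, 0 < q i ∧ 0 < q j ∧ 0 ≤ t ∧ t ≤ 1 ∧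
      t * x i + (1 - t) * x j ≤ ∑ k, q k * x k ∧ ∑ k, q k * y k ≤ t * y i + (1 - t) * y j := by
  have hcenter : ∀ (z : ι → ℝ) (m : ℝ), ∑ i, q i * (z i - m) = ∑ i, q i * z i - m := fun z m => by
    simp only [mul_sub, sum_sub_distrib, ← sum_mul, hq1, one_mul]
  obtain ⟨i, j, t, hqi, hqj, ht0, ht1, hx, hy⟩ := exists_two_point_of_centered
    (fun k => x k - ∑ k, q k * x k) (fun k => y k - ∑ k, q k * y k) hq hq1
    (by rw [hcenter, sub_self]) (by rw [hcenter, sub_self])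
  exact ⟨i, j, t, hqi, hqj, ht0, ht1, by linarith, by linarith⟩

end TwoPoint

section Channel

variable {U A B C : Type}

def channelJoint (K : A → B → C → ℝ) (r : A → B → ℝ) : A × B → C → ℝ :=
  fun x y => r x.1 x.2 * K x.1 x.2 y

lemma channelJoint_smul (K : A → B → C → ℝ) (c : ℝ) (r : A → B → ℝ) :
    channelJoint K (c • r) = c • channelJoint K r := by
  ext x y
  simp only [channelJoint, Pi.smul_apply, smul_eq_mul, mul_assoc]

variable [Fintype U] [Fintype A] [Fintype B] [Fintype C]

lemma condMI_smul_eq_sum (w : U → ℝ) (s : U → A → B → ℝ) :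
    condMI (fun u => w u • s u) = ∑ u, w u * mutualInfo (s u) := by
  simp only [condMI_eq_sum_mutualInfo, mutualInfo_smul]

lemma condMI_channelJoint_smul_eq_sum (K : A → B → C → ℝ) (w : U → ℝ) (s : U → A → B → ℝ) :
    condMI (fun u => channelJoint K (w u • s u)) =
      ∑ u, w u * mutualInfo (channelJoint K (s u)) := by
  simp only [channelJoint_smul, condMI_smul_eq_sum]

lemma isPMF3_smul {w : U → ℝ} {s : U → A → B → ℝ} (hw : ∀ u, 0 ≤ w u) (hw1 : ∑ u, w u = 1)
    (hs : ∀ u a b, 0 ≤ s u a b) (hs1 : ∀ u, ∑ a, ∑ b, s u a b = 1) :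
    IsPMF3 (fun u => w u • s u) := by
  refine ⟨fun u a b => mul_nonneg (hw u) (hs u a b), ?_⟩
  simp only [Pi.smul_apply, smul_eq_mul, ← mul_sum, hs1, mul_one, hw1]

theorem IsPMF3.exists_fin_two (K : A → B → C → ℝ) {p : U → A → B → ℝ} (hp : IsPMF3 p) :
    ∃ p₂ : Fin 2 → A → B → ℝ, IsPMF3 p₂ ∧ condMI p₂ ≤ condMI p ∧
      condMI (fun u => channelJoint K (p u)) ≤ condMI (fun u => channelJoint K (p₂ u)) := by
  obtain ⟨hp0, hp1⟩ := hp
  set q : U → ℝ := fun u => ∑ a, ∑ b, p u a b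
  set s : U → A → B → ℝ := fun u => (q u)⁻¹ • p u
  have hq : ∀ u, 0 ≤ q u := fun u => sum_nonneg fun a _ => sum_nonneg fun b _ => hp0 u a b
  have hps : ∀ u, p u = q u • s u := fun u => by
    rcases eq_or_ne (q u) 0 with h | h
    · ext a b
      have := (sum_eq_zero_iff_of_nonneg fun a _ => sum_nonneg fun b _ => hp0 u a b).1 h a
        (mem_univ a)
      simp [(sum_eq_zero_iff_of_nonneg fun b _ => hp0 u a b).1 this b (mem_univ b), h]
    · simp only [s, smul_smul, mul_inv_cancel₀ h, one_smul]
  have hs0 : ∀ u a b, 0 ≤ s u a b := fun u a b => mul_nonneg (inv_nonneg.2 (hq u)) (hp0 u a b)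
  have hs1 : ∀ u, 0 < q u → ∑ a, ∑ b, s u a b = 1 := fun u hu => by
    simp only [s, Pi.smul_apply, smul_eq_mul, ← mul_sum]
    exact inv_mul_cancel₀ hu.ne'
  obtain ⟨i, j, t, hqi, hqj, ht0, ht1, hx, hy⟩ := exists_two_point_mix
    (fun u => mutualInfo (s u)) (fun u => mutualInfo (channelJoint K (s u))) hq hp1
  have hp : p = fun u => q u • s u := funext hps
  refine ⟨fun u => ![t, 1 - t] u • ![s i, s j] u, isPMF3_smul ?_ ?_ ?_ ?_, ?_, ?_⟩
  · simp [Fin.forall_fin_two, ht0, ht1]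
  · simp [Fin.sum_univ_two]
  · simp [Fin.forall_fin_two, hs0]
  · simp [Fin.forall_fin_two, hs1 i hqi, hs1 j hqj]
  · rw [condMI_smul_eq_sum, hp, condMI_smul_eq_sum]
    simpa [Fin.sum_univ_two] using hx
  · rw [condMI_channelJoint_smul_eq_sum, hp, condMI_channelJoint_smul_eq_sum]
    simpa [Fin.sum_univ_two] using hy

end Channel

theorem sigmaOne_cardinality_two_general
    {X1 X2 Y : Type} [Fintype X1] [Fintype X2] [Fintype Y]
    (M : MAC X1 X2 Y) (δ : ℝ) :
    sigmaN M 1 δ =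
      sSup {r | ∃ (k : ℕ), k ≤ 2 ∧
        ∃ p : Fin k → (Fin 1 → X1) → (Fin 1 → X2) → ℝ,
          IsPMF3 p ∧ condMI p ≤ (1 : ℝ) * δ ∧
          r = (1 / (1 : ℝ)) *
            condMI (fun (u : Fin k) (x : (Fin 1 → X1) × (Fin 1 → X2)) (y : Fin 1 → Y) =>
              p u x.1 x.2 * ∏ t, M.W (x.1 t) (x.2 t) (y t))} := by
  refine csSup_eq_csSup_of_forall_exists_le ?_ ?_
  · rintro _ ⟨k, p, hp, hδ, rfl⟩
    obtain ⟨p₂, hp₂, hI, hO⟩ :=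
      hp.exists_fin_two (fun (a : Fin 1 → X1) (b : Fin 1 → X2) (y : Fin 1 → Y) =>
        ∏ t, M.W (a t) (b t) (y t))
    refine ⟨_, ⟨2, le_rfl, p₂, hp₂, ?_, rfl⟩, ?_⟩
    · push_cast at hδ
      linarith
    · simp only [Nat.cast_one, div_one, one_mul]
      exact hO
  · rintro _ ⟨k, -, p, hp, hδ, rfl⟩
    exact ⟨_, ⟨k, p, hp, by simpa using hδ, by simp⟩, le_rfl⟩

/-- **Cardinality bound.** In the definition of `σ₁(δ)`, the supremum may be
restricted to auxiliary alphabets `𝒰` with `|𝒰| ≤ 2` without changing its value. -/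
theorem sigmaOne_cardinality_two
    {X1 X2 Y : Type} [Fintype X1] [Fintype X2] [Fintype Y]
    (M : MAC X1 X2 Y) (δ : ℝ) (hδ : 0 ≤ δ) :
    sigmaN M 1 δ =
      sSup {r | ∃ (k : ℕ), k ≤ 2 ∧
        ∃ p : Fin k → (Fin 1 → X1) → (Fin 1 → X2) → ℝ,
          IsPMF3 p ∧ condMI p ≤ (1 : ℝ) * δ ∧
          r = (1 / (1 : ℝ)) *
            condMI (fun (u : Fin k) (x : (Fin 1 → X1) × (Fin 1 → X2)) (y : Fin 1 → Y) =>
              p u x.1 x.2 * ∏ t, M.W (x.1 t) (x.2 t) (y t))} :=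
  sigmaOne_cardinality_two_general M δ
end

section
/- Let (𝒳₁×𝒳₂, p(y|x₁,x₂), 𝒴) be a discrete memoryless multiple access channel, 𝒰 a finite set, δ ≥ 0, and p(u,x₁,x₂) a joint pmf with I(X₁;X₂|U) ≤ δ. Define p(y|u) := ∑_{x₁,x₂} p(x₁,x₂|u) p(y|x₁,x₂) and p_ind(y|u) := ∑_{x₁,x₂} p(x₁|u)p(x₂|u) p(y|x₁,x₂). Then ∑_{u∈𝒰} p(u)·‖p(y|u) − p_ind(y|u)‖_{L¹} ≤ √(2δ ln 2). -/
open scoped BigOperators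

variable {U : Type} [Fintype U]

/-- `p(u)`, the marginal of `U` under the joint pmf `p(u,x₁,x₂)`. -/
noncomputable def margU {U X1 X2 : Type} [Fintype U] [Fintype X1] [Fintype X2]
    (p : U → X1 → X2 → ℝ) (u : U) : ℝ :=
  ∑ x1, ∑ x2, p u x1 x2

/-- `p(y|u) = ∑_{x₁,x₂} p(x₁,x₂|u) p(y|x₁,x₂)`. -/
noncomputable def outCond {U X1 X2 Y : Type} [Fintype U] [Fintype X1] [Fintype X2] [Fintype Y]
    (M : MAC X1 X2 Y) (p : U → X1 → X2 → ℝ) (u : U) (y : Y) : ℝ :=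
  ∑ x1, ∑ x2, (p u x1 x2 / margU p u) * M.W x1 x2 y

/-- `p_ind(y|u) = ∑_{x₁,x₂} p(x₁|u)p(x₂|u) p(y|x₁,x₂)`. -/
noncomputable def outCondInd {U X1 X2 Y : Type} [Fintype U] [Fintype X1] [Fintype X2] [Fintype Y]
    (M : MAC X1 X2 Y) (p : U → X1 → X2 → ℝ) (u : U) (y : Y) : ℝ :=
  ∑ x1, ∑ x2,
    ((∑ b, p u x1 b) / margU p u) * ((∑ a, p u a x2) / margU p u) * M.W x1 x2 y

/-!
Write `q_u = p(x₁,x₂|u)` and `r_u = p(x₁|u) p(x₂|u)`. Pushing both through the channel can only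
shrink their L¹ distance, and `I(X₁;X₂|U) · ln 2 = ∑_u p(u) D(q_u ‖ r_u)`. Pinsker's inequality
`‖q_u - r_u‖₁² ≤ 2 D(q_u ‖ r_u)`, averaged over `u` by Jensen, gives the bound. Pinsker itself follows
from the pointwise bound `3 (t - 1)² / (2 (t + 2)) ≤ t log t - t + 1` (the right side is `klFun t`)
and Cauchy–Schwarz with weights `q + 2 r`.
-/

open Real Finset InformationTheory

lemma hasDerivAt_klFun_sub {t : ℝ} (ht : 0 < t) :
    HasDerivAt (fun t => klFun t - 3 * (t - 1) ^ 2 / (2 * (t + 2)))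
      (log t - 3 / 2 + 27 / (2 * (t + 2) ^ 2)) t := by
  refine ((hasDerivAt_klFun ht.ne').sub
    ((((hasDerivAt_id' t).sub_const 1).fun_pow 2).const_mul 3 |>.div
      (((hasDerivAt_id' t).add_const 2).const_mul 2) (by positivity))).congr_deriv ?_
  field_simp
  ring

lemma convexOn_klFun_sub :
    ConvexOn ℝ (Set.Ici 0) (fun t => klFun t - 3 * (t - 1) ^ 2 / (2 * (t + 2))) := by
  refine convexOn_of_hasDerivWithinAt2_nonneg (convex_Ici 0)
    (f' := fun t => log t - 3 / 2 + 27 / (2 * (t + 2) ^ 2))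
    (f'' := fun t => t⁻¹ - 27 / (t + 2) ^ 3) ?_ ?_ ?_ ?_
  · exact continuous_klFun.continuousOn.sub <| ContinuousOn.div (by fun_prop) (by fun_prop)
      fun t (ht : 0 ≤ t) => by positivity
  all_goals rw [interior_Ici]; intro t (ht : 0 < t)
  · exact (hasDerivAt_klFun_sub ht).hasDerivWithinAt
  · refine HasDerivAt.hasDerivWithinAt <| (((hasDerivAt_log ht.ne').sub_const (3 / 2)).add
      ((hasDerivAt_const t (27 : ℝ)).div ((((hasDerivAt_id' t).add_const 2).fun_pow 2).const_mul 2)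
        (by positivity))).congr_deriv ?_
    field_simp
    ring
  · -- `(t + 2) ^ 3 - 27 * t = (t - 1) ^ 2 * (t + 8)`
    rw [sub_nonneg, div_le_iff₀ (by positivity), inv_mul_eq_div, le_div_iff₀ ht]
    nlinarith [sq_nonneg (t - 1)]

lemma three_mul_sq_div_le_klFun {t : ℝ} (ht : 0 ≤ t) :
    3 * (t - 1) ^ 2 / (2 * (t + 2)) ≤ klFun t := by
  have hmin := convexOn_klFun_sub.isMinOn_of_rightDeriv_eq_zero (x := 1) (by simp) ?_ ht
  · simpa [klFun_one] using hmin
  · rw [(hasDerivAt_klFun_sub one_pos).hasDerivWithinAt.derivWithin (uniqueDiffWithinAt_Ioi 1)]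
    norm_num

lemma three_mul_sq_div_le_mul_log_div {x y : ℝ} (hx : 0 ≤ x) (hy : 0 ≤ y) (hxy : y = 0 → x = 0) :
    3 * (x - y) ^ 2 / (2 * (x + 2 * y)) ≤ x * log (x / y) - x + y := by
  rcases hy.eq_or_lt with rfl | hy
  · simp [hxy rfl]
  calc 3 * (x - y) ^ 2 / (2 * (x + 2 * y)) = y * (3 * (x / y - 1) ^ 2 / (2 * (x / y + 2))) := by
        field_simp
    _ ≤ y * klFun (x / y) := by gcongr; exact three_mul_sq_div_le_klFun (by positivity)
    _ = x * log (x / y) - x + y := by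
        rw [klFun_apply]
        field_simp
        ring

theorem sq_sum_abs_sub_le_two_mul_sum_mul_log_div {α : Type*} [Fintype α] {q r : α → ℝ}
    (hq : ∀ a, 0 ≤ q a) (hr : ∀ a, 0 ≤ r a) (hqr : ∀ a, r a = 0 → q a = 0)
    (hq1 : ∑ a, q a = 1) (hr1 : ∑ a, r a = 1) :
    (∑ a, |q a - r a|) ^ 2 ≤ 2 * ∑ a, q a * log (q a / r a) := by
  have hcs : (∑ a, |q a - r a|) ^ 2
      ≤ (∑ a, (q a + 2 * r a)) * ∑ a, (q a - r a) ^ 2 / (q a + 2 * r a) := by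
    refine sum_sq_le_sum_mul_sum_of_sq_le_mul _ (fun a _ => by linarith [hq a, hr a])
      (fun a _ => div_nonneg (sq_nonneg _) (by linarith [hq a, hr a])) fun a _ => ?_
    rcases (show 0 ≤ q a + 2 * r a by linarith [hq a, hr a]).eq_or_lt with h | h
    · simp [show q a = 0 by linarith [hq a, hr a], show r a = 0 by linarith [hq a, hr a]]
    · rw [sq_abs, mul_div_cancel₀ _ h.ne']
  have hsum3 : ∑ a, (q a + 2 * r a) = 3 := by
    rw [sum_add_distrib, ← mul_sum, hq1, hr1]
    norm_num
  have hpointwise : ∑ a, 3 * (q a - r a) ^ 2 / (2 * (q a + 2 * r a))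
      ≤ ∑ a, (q a * log (q a / r a) - q a + r a) :=
    sum_le_sum fun a _ => three_mul_sq_div_le_mul_log_div (hq a) (hr a) (hqr a)
  rw [sum_add_distrib, sum_sub_distrib, hq1, hr1] at hpointwise
  have hscale : ∑ a, 3 * (q a - r a) ^ 2 / (2 * (q a + 2 * r a))
      = 3 / 2 * ∑ a, (q a - r a) ^ 2 / (q a + 2 * r a) := by
    rw [mul_sum]
    exact sum_congr rfl fun a _ => mul_div_mul_comm _ _ _ _
  rw [hsum3] at hcs
  linarith

theorem sum_abs_sum_mul_le_sum_abs {α β : Type*} [Fintype α] [Fintype β] {W : α → β → ℝ}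
    (hW : ∀ a b, 0 ≤ W a b) (hW1 : ∀ a, ∑ b, W a b = 1) (f : α → ℝ) :
    ∑ b, |∑ a, f a * W a b| ≤ ∑ a, |f a| :=
  calc ∑ b, |∑ a, f a * W a b| ≤ ∑ b, ∑ a, |f a| * W a b := by
        gcongr with b
        refine (abs_sum_le_sum_abs _ _).trans_eq (sum_congr rfl fun a _ => ?_)
        rw [abs_mul, abs_of_nonneg (hW a b)]
    _ = ∑ a, |f a| := by
        rw [sum_comm]
        simp only [← mul_sum, hW1, mul_one]

lemma sq_sum_mul_le_sum_mul_sq {ι : Type*} (s : Finset ι) {w f : ι → ℝ}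
    (hw : ∀ i ∈ s, 0 ≤ w i) (hw1 : ∑ i ∈ s, w i = 1) :
    (∑ i ∈ s, w i * f i) ^ 2 ≤ ∑ i ∈ s, w i * f i ^ 2 := by
  simpa [hw1] using sum_sq_le_sum_mul_sum_of_sq_le_mul s hw
    (fun i hi => mul_nonneg (hw i hi) (sq_nonneg (f i))) fun i _ => le_of_eq (by ring)

lemma mul_log_mul_div_mul {x m a b : ℝ} (hx : 0 ≤ x) (hm : x ≤ m) (ha : x ≤ a) (hb : x ≤ b) :
    x * log (x * m / (a * b)) = x * log x + x * log m - x * log a - x * log b := by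
  rcases hx.eq_or_lt with rfl | hx
  · simp
  have hm := hx.trans_le hm
  have ha := hx.trans_le ha
  have hb := hx.trans_le hb
  rw [log_div (by positivity) (by positivity), log_mul hx.ne' hm.ne', log_mul ha.ne' hb.ne']
  ring

lemma ent2_mul_log_two {α : Type} [Fintype α] (f : α → ℝ) :
    ent2 f * log 2 = -∑ a, f a * log (f a) := by
  simp only [ent2, neg_mul, sum_mul, logb, mul_assoc, div_mul_cancel₀ _ (log_pos one_lt_two).ne']

section CondPMF

variable {A B : Type} [Fintype A] [Fintype B] (p : U → A → B → ℝ)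

noncomputable def condJoint (u : U) (x : A × B) : ℝ := p u x.1 x.2 / margU p u

noncomputable def condMargProd (u : U) (x : A × B) : ℝ :=
  (∑ b, p u x.1 b) / margU p u * ((∑ a, p u a x.2) / margU p u)

variable {p}

lemma le_margU (hp : ∀ u a b, 0 ≤ p u a b) (u : U) (a : A) (b : B) : p u a b ≤ margU p u :=
  (single_le_sum (fun b' _ => hp u a b') (mem_univ b)).trans <|
    single_le_sum (f := fun a => ∑ b', p u a b') (fun a' _ => sum_nonneg fun b' _ => hp u a' b')
      (mem_univ a)

lemma margU_nonneg (hp : ∀ u a b, 0 ≤ p u a b) (u : U) : 0 ≤ margU p u :=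
  sum_nonneg fun a _ => sum_nonneg fun b _ => hp u a b

lemma condJoint_nonneg (hp : ∀ u a b, 0 ≤ p u a b) (u : U) (x : A × B) : 0 ≤ condJoint p u x :=
  div_nonneg (hp u x.1 x.2) (margU_nonneg hp u)

lemma condMargProd_nonneg (hp : ∀ u a b, 0 ≤ p u a b) (u : U) (x : A × B) :
    0 ≤ condMargProd p u x :=
  mul_nonneg (div_nonneg (sum_nonneg fun b _ => hp u x.1 b) (margU_nonneg hp u))
    (div_nonneg (sum_nonneg fun a _ => hp u a x.2) (margU_nonneg hp u))

lemma sum_condJoint {u : U} (hu : margU p u ≠ 0) : ∑ x, condJoint p u x = 1 := by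
  simp only [condJoint, Fintype.sum_prod_type, ← sum_div]
  exact div_self hu

lemma sum_condMargProd {u : U} (hu : margU p u ≠ 0) : ∑ x, condMargProd p u x = 1 := by
  simp only [condMargProd, Fintype.sum_prod_type, ← mul_sum, ← sum_mul, ← sum_div]
  rw [sum_comm (γ := B)]
  change margU p u / margU p u * (margU p u / margU p u) = 1
  rw [div_self hu, one_mul]

lemma condJoint_eq_zero_of_condMargProd_eq_zero (hp : ∀ u a b, 0 ≤ p u a b) {u : U} {x : A × B}
    (hx : condMargProd p u x = 0) : condJoint p u x = 0 := by
  rcases (hp u x.1 x.2).eq_or_lt with h | h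
  · rw [condJoint, ← h, zero_div]
  · have := h.trans_le (single_le_sum (fun b _ => hp u x.1 b) (mem_univ x.2))
    have := h.trans_le (single_le_sum (fun a _ => hp u a x.2) (mem_univ x.1))
    have := h.trans_le (le_margU hp u x.1 x.2)
    exact absurd hx (by rw [condMargProd]; positivity)

lemma margU_mul_sum_condJoint_mul_log (hp : ∀ u a b, 0 ≤ p u a b) (u : U) :
    margU p u * ∑ x, condJoint p u x * log (condJoint p u x / condMargProd p u x)
      = ∑ a, ∑ b, p u a b * log (p u a b * margU p u / ((∑ b', p u a b') * ∑ a', p u a' b)) := by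
  rcases (margU_nonneg hp u).eq_or_lt with hu | hu
  · have hzero : ∀ a b, p u a b = 0 := fun a b =>
      le_antisymm (hu ▸ le_margU hp u a b) (hp u a b)
    simp [← hu, hzero]
  rw [mul_sum, Fintype.sum_prod_type]
  refine sum_congr rfl fun a _ => sum_congr rfl fun b _ => ?_
  simp only [condJoint, condMargProd]
  rw [← mul_assoc, mul_div_cancel₀ _ hu.ne']
  congr 2
  field_simp

theorem condMI_mul_log_two (hp : ∀ u a b, 0 ≤ p u a b) :
    condMI p * log 2 = ∑ u, ∑ a, ∑ b,
      p u a b * log (p u a b * margU p u / ((∑ b', p u a b') * ∑ a', p u a' b)) := by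
  have hUB : ∑ u, ∑ b, ∑ a, p u a b * log (∑ a', p u a' b)
      = ∑ u, ∑ a, ∑ b, p u a b * log (∑ a', p u a' b) :=
    sum_congr rfl fun u _ => sum_comm
  have hsplit (u : U) (a : A) (b : B) :=
    mul_log_mul_div_mul (hp u a b) (le_margU hp u a b)
      (single_le_sum (fun b' _ => hp u a b') (mem_univ b))
      (single_le_sum (fun a' _ => hp u a' b) (mem_univ a))
  simp only [hsplit]
  simp only [condMI, margU, sub_mul, add_mul, ent2_mul_log_two, Fintype.sum_prod_type,
    sum_mul, hUB, sum_add_distrib, sum_sub_distrib]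
  ring

end CondPMF

lemma outCond_sub_outCondInd {X1 X2 Y : Type} [Fintype X1] [Fintype X2] [Fintype Y]
    (M : MAC X1 X2 Y) (p : U → X1 → X2 → ℝ) (u : U) (y : Y) :
    outCond M p u y - outCondInd M p u y
      = ∑ x, (condJoint p u x - condMargProd p u x) * M.W x.1 x.2 y := by
  simp only [outCond, outCondInd, condJoint, condMargProd, sub_mul, sum_sub_distrib,
    Fintype.sum_prod_type]

theorem output_L1_bound_general
    {U X1 X2 Y : Type} [Fintype U] [Fintype X1] [Fintype X2] [Fintype Y]
    (M : MAC X1 X2 Y) (δ : ℝ)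
    (p : U → X1 → X2 → ℝ) (hp : IsPMF3 p) (hMI : condMI p ≤ δ) :
    ∑ u, margU p u * (∑ y, |outCond M p u y - outCondInd M p u y|)
      ≤ Real.sqrt (2 * δ * Real.log 2) := by
  obtain ⟨hp0, hp1⟩ := hp
  set TV : U → ℝ := fun u => ∑ x, |condJoint p u x - condMargProd p u x|
  set KL : U → ℝ := fun u =>
    ∑ x, condJoint p u x * log (condJoint p u x / condMargProd p u x)
  have hout (u : U) : ∑ y, |outCond M p u y - outCondInd M p u y| ≤ TV u := by
    simpa only [outCond_sub_outCondInd] using sum_abs_sum_mul_le_sum_abs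
      (W := fun (x : X1 × X2) y => M.W x.1 x.2 y) (fun x => M.nonneg x.1 x.2)
      (fun x => M.sum_one x.1 x.2) _
  have hpinsker (u : U) : margU p u * TV u ^ 2 ≤ margU p u * (2 * KL u) := by
    rcases (margU_nonneg hp0 u).eq_or_lt with hu | hu
    · simp [← hu]
    · exact mul_le_mul_of_nonneg_left (sq_sum_abs_sub_le_two_mul_sum_mul_log_div
        (condJoint_nonneg hp0 u) (condMargProd_nonneg hp0 u)
        (fun _ => condJoint_eq_zero_of_condMargProd_eq_zero hp0)
        (sum_condJoint hu.ne') (sum_condMargProd hu.ne')) hu.le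
  have hKL : ∑ u, margU p u * KL u = condMI p * log 2 := by
    simp only [KL, margU_mul_sum_condJoint_mul_log hp0, condMI_mul_log_two hp0]
  refine Real.le_sqrt_of_sq_le ?_
  calc (∑ u, margU p u * ∑ y, |outCond M p u y - outCondInd M p u y|) ^ 2
      ≤ (∑ u, margU p u * TV u) ^ 2 := by
        gcongr with u
        · exact sum_nonneg fun u _ =>
            mul_nonneg (margU_nonneg hp0 u) (sum_nonneg fun _ _ => abs_nonneg _)
        · exact margU_nonneg hp0 u
        · exact hout u
    _ ≤ ∑ u, margU p u * TV u ^ 2 := sq_sum_mul_le_sum_mul_sq _ (fun u _ => margU_nonneg hp0 u) hp1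
    _ ≤ ∑ u, margU p u * (2 * KL u) := sum_le_sum fun u _ => hpinsker u
    _ = 2 * (condMI p * log 2) := by simp only [mul_left_comm _ (2 : ℝ), ← mul_sum, hKL]
    _ ≤ 2 * δ * log 2 := by nlinarith [log_pos one_lt_two]

/-- If `I(X₁;X₂|U) ≤ δ` (in bits), then
`∑_u p(u)·‖p(y|u) − p_ind(y|u)‖_{L¹} ≤ √(2δ ln 2)`. -/
theorem output_L1_bound
    {U X1 X2 Y : Type} [Fintype U] [Fintype X1] [Fintype X2] [Fintype Y]
    (M : MAC X1 X2 Y) (δ : ℝ) (hδ : 0 ≤ δ)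
    (p : U → X1 → X2 → ℝ) (hp : IsPMF3 p) (hMI : condMI p ≤ δ) :
    ∑ u, margU p u * (∑ y, |outCond M p u y - outCondInd M p u y|)
      ≤ Real.sqrt (2 * δ * Real.log 2) :=
  output_L1_bound_general M δ p hp hMI
end
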